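/- arXiv:1811.08218 — 7 statements merged into one kernel-verified Lean document; each statement's English description precedes it below -/
import Mathlib

section
/- Let G and H be complex Hilbert spaces, let A : H → G, B : G → H, C : H → G, D : H → H, E : H → H be bounded linear operators, and let M ≥ 1. Assume: (a) ‖A‖ ≤ M, ‖B‖ ≤ M, ‖C‖ ≤ M, ‖D‖ ≤ M, ‖E‖ ≤ M; (b) Id_H + D∘E∘D has a bounded two-sided inverse with ‖(Id_H + D∘E∘D)⁻¹‖ ≤ M; (c) ε := ‖D∘(B∘C − E)∘D‖ ≤ 1/(2M). Then Id_G + C∘D²∘B has a bounded two-sided inverse, ‖(Id_G + C∘D²∘B)⁻¹‖ ≤ 3M⁵, and ‖A∘D²∘B∘(Id_G + C∘D²∘B)⁻¹ − A∘D∘(Id_H + D∘E∘D)⁻¹∘D∘B‖ ≤ 2M⁶ε. -/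
/-!
Put `T = 1 + D E D` and `S = D (B C - E) D`, so that `1 + (D B) (C D) = T + S`. Since
`‖T⁻¹‖ ‖S‖ ≤ 1/2`, a Neumann series shows that `T + S` has an inverse `L` with `‖L‖ ≤ 2 ‖T⁻¹‖`,
and `L - T⁻¹ = -L S T⁻¹`. With `P = C D` and `Q = D B`, the push-through identity turns the
inverse `L` of `1 + Q P` into the inverse `1 - P L Q` of `1 + P Q = 1 + C D² B`, and
`Q (1 - P L Q) = L Q` gives `A D² B (1 + C D² B)⁻¹ = A D L D B`. Its distance to
`A D T⁻¹ D B` is `‖A D L S T⁻¹ D B‖ ≤ 2 M⁶ ε`.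
-/

open ContinuousLinearMap

section PushThrough

variable {R : Type*} [Ring R]
  {E F : Type*} [TopologicalSpace E] [AddCommGroup E] [Module R E] [IsTopologicalAddGroup E]
  [TopologicalSpace F] [AddCommGroup F] [Module R F] [IsTopologicalAddGroup F]
  {P : F →L[R] E} {Q : E →L[R] F} {L : F →L[R] F}

theorem comp_one_sub_comp_comp_eq (h : (1 + Q ∘L P) ∘L L = 1) :
    Q ∘L (1 - P ∘L L ∘L Q) = L ∘L Q := by
  ext x
  have hx := congr($h (Q x))
  simp only [comp_apply, add_apply, one_apply_eq_self] at hx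
  simp only [comp_apply, sub_apply, one_apply_eq_self, map_sub]
  exact sub_eq_of_eq_add hx.symm

theorem one_add_comp_comp_one_sub_eq_one (h : (1 + Q ∘L P) ∘L L = 1) :
    (1 + P ∘L Q) ∘L (1 - P ∘L L ∘L Q) = 1 := by
  rw [add_comp, comp_assoc P Q, comp_one_sub_comp_comp_eq h, one_def, id_comp, sub_add_cancel]

theorem one_sub_comp_comp_one_add_eq_one (h : L ∘L (1 + Q ∘L P) = 1) :
    (1 - P ∘L L ∘L Q) ∘L (1 + P ∘L Q) = 1 := by
  ext x
  have hx := congr(P ($h (Q x)))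
  simp only [comp_apply, add_apply, one_apply_eq_self, map_add] at hx
  simp only [comp_apply, sub_apply, add_apply, one_apply_eq_self, map_add]
  linear_combination (norm := module) -hx

end PushThrough

section Perturbation

variable {R : Type*}

theorem sub_eq_neg_mul_mul_of_mul_add_eq_one [Ring R] {T J S L : R}
    (hL : L * (T + S) = 1) (hJ : T * J = 1) : L - J = -(L * S * J) := by
  calc L - J = L * (T * J) - L * (T + S) * J := by rw [hJ, hL, mul_one, one_mul]
    _ = -(L * S * J) := by noncomm_ring

theorem exists_inverse_add_of_norm_mul_norm_le_half [NormedRing R] [CompleteSpace R]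
    {T J S : R} (hTJ : T * J = 1) (hJT : J * T = 1) (hS : ‖J‖ * ‖S‖ ≤ 1 / 2) :
    ∃ L : R, (T + S) * L = 1 ∧ L * (T + S) = 1 ∧ ‖L‖ ≤ 2 * ‖J‖ := by
  have hJS : ‖-(J * S)‖ < 1 := by
    rw [norm_neg]; linarith [norm_mul_le J S]
  set u := Units.oneSub (-(J * S)) hJS
  have hu : (u : R) = 1 + J * S := sub_neg_eq_add 1 (J * S)
  have hfactor : T + S = T * u := by rw [hu, mul_add, mul_one, ← mul_assoc, hTJ, one_mul]
  have hleft : (T + S) * (↑u⁻¹ * J) = 1 := by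
    rw [hfactor, mul_assoc, u.mul_inv_cancel_left, hTJ]
  have hright : ↑u⁻¹ * J * (T + S) = 1 := by
    rw [hfactor, mul_assoc, ← mul_assoc J, hJT, one_mul, u.inv_mul]
  refine ⟨↑u⁻¹ * J, hleft, hright, ?_⟩
  set L := ↑u⁻¹ * J
  have hres : L = J - L * S * J := by
    rw [sub_eq_add_neg, ← sub_eq_neg_mul_mul_of_mul_add_eq_one hright hTJ, add_sub_cancel]
  have hbound : ‖L‖ ≤ ‖J‖ + ‖L‖ * (‖J‖ * ‖S‖) := calc
    ‖L‖ = ‖J - L * S * J‖ := congrArg _ hres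
    _ ≤ ‖J‖ + ‖L‖ * ‖S‖ * ‖J‖ := (norm_sub_le _ _).trans (add_le_add_right (norm_mul₃_le ..) _)
    _ = _ := by ring
  nlinarith [norm_nonneg L]

end Perturbation

theorem stmt0_general
    {G H : Type*} [NormedAddCommGroup G] [InnerProductSpace ℂ G]
    [NormedAddCommGroup H] [InnerProductSpace ℂ H] [CompleteSpace H]
    (A : H →L[ℂ] G) (B : G →L[ℂ] H) (C : H →L[ℂ] G) (D E : H →L[ℂ] H)
    (M : ℝ) (hM : 1 ≤ M)
    (hA : ‖A‖ ≤ M) (hB : ‖B‖ ≤ M) (hC : ‖C‖ ≤ M) (hD : ‖D‖ ≤ M)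
    (J : H →L[ℂ] H)
    (hJl : (1 + D ∘L E ∘L D) ∘L J = 1) (hJr : J ∘L (1 + D ∘L E ∘L D) = 1)
    (hJnorm : ‖J‖ ≤ M)
    (hsmall : ‖D ∘L (B ∘L C - E) ∘L D‖ ≤ 1 / (2 * M)) :
    ∃ K : G →L[ℂ] G,
      (1 + C ∘L (D ∘L D) ∘L B) ∘L K = 1 ∧
      K ∘L (1 + C ∘L (D ∘L D) ∘L B) = 1 ∧
      ‖K‖ ≤ 3 * M ^ 5 ∧
      ‖(A ∘L (D ∘L D) ∘L B) ∘L K - (A ∘L D) ∘L J ∘L (D ∘L B)‖ ≤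
        2 * M ^ 6 * ‖D ∘L (B ∘L C - E) ∘L D‖ := by
  have hM0 : 0 ≤ M := zero_le_one.trans hM
  set S := D ∘L (B ∘L C - E) ∘L D
  have hJS : ‖J‖ * ‖S‖ ≤ 1 / 2 := calc
    ‖J‖ * ‖S‖ ≤ M * (1 / (2 * M)) := by gcongr
    _ = 1 / 2 := by field_simp
  obtain ⟨L, hL, hLr, hLnorm⟩ := exists_inverse_add_of_norm_mul_norm_le_half hJl hJr hJS
  have hLJ := sub_eq_neg_mul_mul_of_mul_add_eq_one hLr hJl
  have hsum : 1 + D ∘L E ∘L D + S = 1 + (D ∘L B) ∘L (C ∘L D) := by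
    simp only [S, comp_sub, sub_comp, comp_assoc, add_add_sub_cancel]
  rw [hsum] at hL hLr
  have hCD : ‖C ∘L D‖ ≤ M * M := (opNorm_comp_le _ _).trans (mul_le_mul hC hD (norm_nonneg _) hM0)
  have hDB : ‖D ∘L B‖ ≤ M * M := (opNorm_comp_le _ _).trans (mul_le_mul hD hB (norm_nonneg _) hM0)
  have hAD : ‖A ∘L D‖ ≤ M * M := (opNorm_comp_le _ _).trans (mul_le_mul hA hD (norm_nonneg _) hM0)
  have hL2M : ‖L‖ ≤ 2 * M := hLnorm.trans (by linarith)
  rw [show C ∘L (D ∘L D) ∘L B = (C ∘L D) ∘L (D ∘L B) by simp only [comp_assoc],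
    show A ∘L (D ∘L D) ∘L B = (A ∘L D) ∘L (D ∘L B) by simp only [comp_assoc]]
  refine ⟨1 - (C ∘L D) ∘L L ∘L (D ∘L B), one_add_comp_comp_one_sub_eq_one hL,
    one_sub_comp_comp_one_add_eq_one hLr, ?_, ?_⟩
  · calc ‖1 - (C ∘L D) ∘L L ∘L (D ∘L B)‖ ≤ 1 + ‖C ∘L D‖ * (‖L‖ * ‖D ∘L B‖) :=
          (norm_sub_le _ _).trans (add_le_add norm_id_le
            ((opNorm_comp_le _ _).trans (by gcongr; exact opNorm_comp_le _ _)))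
      _ ≤ 1 + M * M * (2 * M * (M * M)) := by gcongr
      _ ≤ 3 * M ^ 5 := by nlinarith [one_le_pow₀ (n := 5) hM]
  · rw [comp_assoc, comp_one_sub_comp_comp_eq hL, ← comp_sub, ← sub_comp, hLJ]
    calc ‖(A ∘L D) ∘L (-(L * S * J)) ∘L (D ∘L B)‖
        ≤ ‖A ∘L D‖ * (‖L‖ * ‖S‖ * ‖J‖ * ‖D ∘L B‖) :=
          (opNorm_comp_le _ _).trans (by
            gcongr; exact (opNorm_comp_le _ _).trans (by rw [norm_neg]; gcongr; exact norm_mul₃_le))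
      _ ≤ M * M * (2 * M * ‖S‖ * M * (M * M)) := by gcongr
      _ = 2 * M ^ 6 * ‖S‖ := by ring

/-- Abstract cyclicity lemma (Lemma 1l of the paper): if `Id + D E D` is invertible with
inverse bounded by `M` and `D (B C - E) D` is small, then `Id + C D² B` is invertible,
its inverse is bounded by `3 M⁵`, and `A D² B (Id + C D² B)⁻¹` is close to
`A D (Id + D E D)⁻¹ D B`. -/
theorem stmt0
    {G H : Type*} [NormedAddCommGroup G] [InnerProductSpace ℂ G] [CompleteSpace G]
    [NormedAddCommGroup H] [InnerProductSpace ℂ H] [CompleteSpace H]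
    (A : H →L[ℂ] G) (B : G →L[ℂ] H) (C : H →L[ℂ] G) (D E : H →L[ℂ] H)
    (M : ℝ) (hM : 1 ≤ M)
    (hA : ‖A‖ ≤ M) (hB : ‖B‖ ≤ M) (hC : ‖C‖ ≤ M) (hD : ‖D‖ ≤ M) (hE : ‖E‖ ≤ M)
    (J : H →L[ℂ] H)
    (hJl : (1 + D ∘L E ∘L D) ∘L J = 1) (hJr : J ∘L (1 + D ∘L E ∘L D) = 1)
    (hJnorm : ‖J‖ ≤ M)
    (hsmall : ‖D ∘L (B ∘L C - E) ∘L D‖ ≤ 1 / (2 * M)) :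
    ∃ K : G →L[ℂ] G,
      (1 + C ∘L (D ∘L D) ∘L B) ∘L K = 1 ∧
      K ∘L (1 + C ∘L (D ∘L D) ∘L B) = 1 ∧
      ‖K‖ ≤ 3 * M ^ 5 ∧
      ‖(A ∘L (D ∘L D) ∘L B) ∘L K - (A ∘L D) ∘L J ∘L (D ∘L B)‖ ≤
        2 * M ^ 6 * ‖D ∘L (B ∘L C - E) ∘L D‖ :=
  stmt0_general A B C D E M hM hA hB hC hD J hJl hJr hJnorm hsmall
end

section
/- Let ϑ⋆ ∈ ℝ ∖ {0}, ν⋆ ∈ ℂ ∖ {0}, μ ∈ ℝ, and let k', ℓ ∈ ℂ with k' ≠ 0 and Re(k'·conj(ℓ)) = 0; set ϑ_F = |ϑ⋆|, ν_F = |ν⋆|, and fix ϑ♯ ∈ (0, ϑ_F). Then there exists C > 0 such that for every z ∈ ℂ with |z| ≤ ϑ♯ and every τ ∈ ℝ, the 2×2 matrix A(τ,z) with rows (ϑ⋆ − z, ν⋆(τk' + μℓ)) and (conj(ν⋆(τk' + μℓ)), −ϑ⋆ − z) is invertible and ‖A(τ,z)⁻¹‖ ≤ C/(1 + |τ|). In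 particular, for every a > 0 one has ‖A(τ,z)⁻¹‖ ≤ C/a whenever |τ| ≥ a, and |τ|·‖A(τ,z)⁻¹‖ ≤ C for all τ ∈ ℝ. -/
/-!
Write `A(τ,z) = H - z` with `H = [[ϑ⋆, w], [w̄, -ϑ⋆]]` Hermitian and `w = ν⋆(τk' + μℓ)`.
Then `H² = r²` with `r² = ϑ⋆² + |w|²`, so `(H - z)⁻¹ = (H + z) / (r² - z²)`; the C*-identity
gives `‖H‖ ≤ r`, hence `‖A(τ,z)⁻¹‖ ≤ 1 / (r - |z|)`. Orthogonality of `k'` and `ℓ` gives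
`|w| ≥ |ν⋆| |k'| |τ|`, so `r - ϑ♯` is at least `ϑ_F - ϑ♯` and grows linearly in `|τ|`.
-/

open Matrix

/-- The 2×2 symbol `A(τ,z)` appearing in Lemma 1k of the paper. -/
noncomputable def Amat (ϑstar : ℝ) (νstar k' ℓ : ℂ) (μ : ℝ) (τ : ℝ) (z : ℂ) :
    Matrix (Fin 2) (Fin 2) ℂ :=
  !![(ϑstar : ℂ) - z, νstar * ((τ : ℂ) * k' + (μ : ℂ) * ℓ);
     (starRingEnd ℂ) (νstar * ((τ : ℂ) * k' + (μ : ℂ) * ℓ)), -(ϑstar : ℂ) - z]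

namespace Matrix

variable {𝕜 n : Type*} [RCLike 𝕜] [Fintype n] [DecidableEq n]

theorem add_smul_one_mul_sub_smul_one {H : Matrix n n 𝕜} {s : 𝕜} (hsq : H * H = s • 1) (z : 𝕜) :
    (H + z • 1) * (H - z • 1) = (s - z ^ 2) • 1 := by
  simp only [add_mul, mul_sub, hsq, smul_mul_assoc, mul_smul_comm, one_mul, mul_one]
  module

theorem norm_toEuclideanCLM_le_of_mul_self_eq {H : Matrix n n 𝕜} (hH : H.IsHermitian) {r : ℝ}
    (hr : 0 ≤ r) (hsq : H * H = ((r : 𝕜) ^ 2) • 1) : ‖toEuclideanCLM (𝕜 := 𝕜) H‖ ≤ r := by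
  refine (mul_self_le_mul_self_iff (norm_nonneg _) hr).2 ?_
  rw [← CStarRing.norm_star_mul_self, ← map_star, star_eq_conjTranspose, hH.eq, ← map_mul, hsq,
    map_smul, map_one, norm_smul, norm_pow, RCLike.norm_ofReal, sq_abs, ← sq]
  exact mul_le_of_le_one_right (sq_nonneg r) ContinuousLinearMap.norm_id_le

theorem isUnit_sub_smul_one_and_norm_inv_le {H : Matrix n n 𝕜} (hH : H.IsHermitian) {r : ℝ}
    (hsq : H * H = ((r : 𝕜) ^ 2) • 1) {z : 𝕜} (hz : ‖z‖ < r) :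
    IsUnit (H - z • 1) ∧ ‖toEuclideanCLM (n := n) (𝕜 := 𝕜) (H - z • 1)⁻¹‖ ≤ 1 / (r - ‖z‖) := by
  have hr : 0 < r := (norm_nonneg z).trans_lt hz
  have hgap : r ^ 2 - ‖z‖ ^ 2 ≤ ‖(r : 𝕜) ^ 2 - z ^ 2‖ := by
    have := norm_sub_norm_le ((r : 𝕜) ^ 2) (z ^ 2)
    rwa [norm_pow, norm_pow, RCLike.norm_ofReal, sq_abs] at this
  have hgap_pos : 0 < r ^ 2 - ‖z‖ ^ 2 := by nlinarith [norm_nonneg z]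
  have hleft : ((r : 𝕜) ^ 2 - z ^ 2)⁻¹ • (H + z • 1) * (H - z • 1) = 1 := by
    rw [smul_mul_assoc, add_smul_one_mul_sub_smul_one hsq, smul_smul,
      inv_mul_cancel₀ (norm_pos_iff.1 (hgap_pos.trans_le hgap)), one_smul]
  refine ⟨(isUnit_iff_isUnit_det _).2 (isUnit_det_of_left_inverse hleft), ?_⟩
  have hsum : ‖toEuclideanCLM (n := n) (𝕜 := 𝕜) (H + z • 1)‖ ≤ r + ‖z‖ := by
    rw [map_add, map_smul, map_one]
    refine (norm_add_le _ _).trans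
      (add_le_add (norm_toEuclideanCLM_le_of_mul_self_eq hH hr.le hsq) ?_)
    rw [norm_smul]
    exact mul_le_of_le_one_right (norm_nonneg z) ContinuousLinearMap.norm_id_le
  calc ‖toEuclideanCLM (n := n) (𝕜 := 𝕜) (H - z • 1)⁻¹‖
      = ‖toEuclideanCLM (n := n) (𝕜 := 𝕜) (H + z • 1)‖ / ‖(r : 𝕜) ^ 2 - z ^ 2‖ := by
        rw [inv_eq_left_inv hleft, map_smul, norm_smul, norm_inv, inv_mul_eq_div]
    _ ≤ (r + ‖z‖) / (r ^ 2 - ‖z‖ ^ 2) := by gcongr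
    _ = 1 / (r - ‖z‖) := by
        rw [div_eq_div_iff hgap_pos.ne' (sub_pos.2 hz).ne']
        ring

theorem isHermitian_fin_two_of_real (a : ℝ) (w : 𝕜) :
    (!![(a : 𝕜), w; starRingEnd 𝕜 w, -a]).IsHermitian := by
  ext i j
  fin_cases i <;> fin_cases j <;> simp

theorem fin_two_of_real_mul_self (a : ℝ) (w : 𝕜) :
    !![(a : 𝕜), w; starRingEnd 𝕜 w, -a] * !![(a : 𝕜), w; starRingEnd 𝕜 w, -a] =
      ((a ^ 2 + ‖w‖ ^ 2 : ℝ) : 𝕜) • 1 := by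
  have hw : w * starRingEnd 𝕜 w = ((‖w‖ ^ 2 : ℝ) : 𝕜) := by
    rw [RCLike.mul_conj, RCLike.ofReal_pow]
  ext i j
  fin_cases i <;> fin_cases j <;>
    simp [mul_comm (starRingEnd 𝕜 w) w, hw, RCLike.real_smul_eq_coe_mul] <;> ring

end Matrix

theorem Complex.norm_sq_real_mul_add_real_mul {k ℓ : ℂ} (h : (k * starRingEnd ℂ ℓ).re = 0)
    (τ μ : ℝ) : ‖(τ : ℂ) * k + (μ : ℂ) * ℓ‖ ^ 2 = τ ^ 2 * ‖k‖ ^ 2 + μ ^ 2 * ‖ℓ‖ ^ 2 := by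
  simp only [Complex.mul_re, Complex.conj_re, Complex.conj_im] at h
  simp only [Complex.sq_norm, Complex.normSq_apply, Complex.add_re, Complex.add_im,
    Complex.mul_re, Complex.mul_im, Complex.ofReal_re, Complex.ofReal_im]
  linear_combination (2 * τ * μ) * h

theorem one_div_sub_le_div_one_add {s θ r m t : ℝ} (hs : 0 ≤ s) (hsθ : s < θ) (hθr : θ ≤ r)
    (hm : 0 < m) (ht : 0 ≤ t) (hmt : m * t ≤ r) :
    1 / (r - s) ≤ (1 + θ / m) / (θ - s) / (1 + t) := by
  have hθ : 0 < θ := hs.trans_lt hsθ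
  rw [div_le_div_iff₀ (by linarith) (by positivity), div_mul_eq_mul_div,
    le_div_iff₀ (by linarith)]
  field_simp
  nlinarith [mul_le_mul_of_nonneg_left hmt (sub_pos.2 hsθ).le, mul_nonneg hs (sub_nonneg.2 hθr)]

theorem Amat_eq_sub_smul_one (ϑstar : ℝ) (νstar k' ℓ : ℂ) (μ τ : ℝ) (z : ℂ) :
    Amat ϑstar νstar k' ℓ μ τ z =
      !![(ϑstar : ℂ), νstar * ((τ : ℂ) * k' + (μ : ℂ) * ℓ);
        starRingEnd ℂ (νstar * ((τ : ℂ) * k' + (μ : ℂ) * ℓ)), -ϑstar] - z • 1 := by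
  ext i j
  fin_cases i <;> fin_cases j <;> simp [Amat]

theorem stmt2_general (ϑstar : ℝ) (νstar : ℂ) (hν : νstar ≠ 0) (μ : ℝ)
    (k' ℓ : ℂ) (hk : k' ≠ 0) (horth : (k' * (starRingEnd ℂ) ℓ).re = 0)
    (ϑsharp : ℝ) (hϑs : ϑsharp ∈ Set.Ioo (0 : ℝ) |ϑstar|) :
    ∃ C > 0, ∀ z : ℂ, ‖z‖ ≤ ϑsharp → ∀ τ : ℝ,
      IsUnit (Amat ϑstar νstar k' ℓ μ τ z) ∧
      ‖Matrix.toEuclideanCLM (𝕜 := ℂ) ((Amat ϑstar νstar k' ℓ μ τ z)⁻¹)‖ ≤ C / (1 + |τ|) ∧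
      (∀ a : ℝ, 0 < a → a ≤ |τ| →
        ‖Matrix.toEuclideanCLM (𝕜 := ℂ) ((Amat ϑstar νstar k' ℓ μ τ z)⁻¹)‖ ≤ C / a) ∧
      |τ| * ‖Matrix.toEuclideanCLM (𝕜 := ℂ) ((Amat ϑstar νstar k' ℓ μ τ z)⁻¹)‖ ≤ C := by
  obtain ⟨hs0, hsθ⟩ := hϑs
  have hm : 0 < ‖νstar‖ * ‖k'‖ := mul_pos (norm_pos_iff.2 hν) (norm_pos_iff.2 hk)
  set C := (1 + |ϑstar| / (‖νstar‖ * ‖k'‖)) / (|ϑstar| - ϑsharp)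
  have hC : 0 < C := div_pos (by positivity) (sub_pos.2 hsθ)
  refine ⟨C, hC, fun z hz τ => ?_⟩
  set w := νstar * ((τ : ℂ) * k' + (μ : ℂ) * ℓ)
  set H : Matrix (Fin 2) (Fin 2) ℂ := !![(ϑstar : ℂ), w; starRingEnd ℂ w, -ϑstar]
  set r := √(ϑstar ^ 2 + ‖w‖ ^ 2)
  have hsq : H * H = ((r : ℂ) ^ 2) • 1 := by
    rw [← Complex.ofReal_pow, Real.sq_sqrt (by positivity)]
    exact Matrix.fin_two_of_real_mul_self ϑstar w
  have hϑr : |ϑstar| ≤ r := Real.abs_le_sqrt (le_add_of_nonneg_right (by positivity))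
  have hτr : ‖νstar‖ * ‖k'‖ * |τ| ≤ r := by
    have hτ : |τ| * ‖k'‖ ≤ ‖(τ : ℂ) * k' + (μ : ℂ) * ℓ‖ := by
      refine le_of_pow_le_pow_left₀ two_ne_zero (norm_nonneg _) ?_
      rw [Complex.norm_sq_real_mul_add_real_mul horth, mul_pow, sq_abs]
      nlinarith [sq_nonneg μ, sq_nonneg ‖ℓ‖]
    calc ‖νstar‖ * ‖k'‖ * |τ| ≤ ‖w‖ := by rw [norm_mul, mul_assoc, mul_comm ‖k'‖]; gcongr
      _ ≤ r := Real.le_sqrt_of_sq_le (le_add_of_nonneg_left (sq_nonneg _))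
  obtain ⟨hunit, hnorm⟩ := Matrix.isUnit_sub_smul_one_and_norm_inv_le
    (Matrix.isHermitian_fin_two_of_real ϑstar w) hsq (hz.trans_lt (hsθ.trans_le hϑr))
  have hA : Amat ϑstar νstar k' ℓ μ τ z = H - z • 1 := Amat_eq_sub_smul_one ϑstar νstar k' ℓ μ τ z
  have hbound : ‖Matrix.toEuclideanCLM (𝕜 := ℂ) ((Amat ϑstar νstar k' ℓ μ τ z)⁻¹)‖
      ≤ C / (1 + |τ|) := by
    rw [hA]
    refine hnorm.trans ((one_div_le_one_div_of_le ?_ ?_).trans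
      (one_div_sub_le_div_one_add hs0.le hsθ hϑr hm (abs_nonneg τ) hτr)) <;> linarith
  refine ⟨hA ▸ hunit, hbound,
    fun a ha haτ => hbound.trans (div_le_div_of_nonneg_left hC.le ha (by linarith)), ?_⟩
  calc |τ| * ‖Matrix.toEuclideanCLM (𝕜 := ℂ) ((Amat ϑstar νstar k' ℓ μ τ z)⁻¹)‖
      ≤ |τ| * (C / (1 + |τ|)) := by gcongr
    _ ≤ C := by
      rw [mul_div_assoc', div_le_iff₀ (by positivity)]
      linarith

/-- Lemma 1k of the paper: the inverse symbol `A(τ,z)⁻¹` is an order `-1` symbol,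
uniformly for `|z| ≤ ϑ♯ < ϑ_F`. -/
theorem stmt2 (ϑstar : ℝ) (hϑ : ϑstar ≠ 0) (νstar : ℂ) (hν : νstar ≠ 0) (μ : ℝ)
    (k' ℓ : ℂ) (hk : k' ≠ 0) (horth : (k' * (starRingEnd ℂ) ℓ).re = 0)
    (ϑsharp : ℝ) (hϑs : ϑsharp ∈ Set.Ioo (0 : ℝ) |ϑstar|) :
    ∃ C > 0, ∀ z : ℂ, ‖z‖ ≤ ϑsharp → ∀ τ : ℝ,
      IsUnit (Amat ϑstar νstar k' ℓ μ τ z) ∧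
      ‖Matrix.toEuclideanCLM (𝕜 := ℂ) ((Amat ϑstar νstar k' ℓ μ τ z)⁻¹)‖ ≤ C / (1 + |τ|) ∧
      (∀ a : ℝ, 0 < a → a ≤ |τ| →
        ‖Matrix.toEuclideanCLM (𝕜 := ℂ) ((Amat ϑstar νstar k' ℓ μ τ z)⁻¹)‖ ≤ C / a) ∧
      |τ| * ‖Matrix.toEuclideanCLM (𝕜 := ℂ) ((Amat ϑstar νstar k' ℓ μ τ z)⁻¹)‖ ≤ C :=
  stmt2_general ϑstar νstar hν μ k' ℓ hk horth ϑsharp hϑs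
end

section
/- Assume in addition that U is smooth (C∞). Then there exists C > 0 such that for every δ ∈ (0,1) and all compactly supported continuously differentiable functions f, g : ℝ → ℂ², one has |∫_ℝ ⟨f(t), (U(t/δ, t) − U⁰(t))·g(t)⟩_{ℂ²} dt| ≤ C·δ·‖f‖_{H¹}·‖g‖_{H¹}. -/
set_option maxHeartbeats 1600000

open MeasureTheory intervalIntegral

-- Cauchy-Schwarz helper
lemma myCS (a b : ℝ → ℂ) (ha : Continuous a) (hb : Continuous b) (hsa : HasCompactSupport a)
    (hsb : HasCompactSupport b) :
    ∫ t : ℝ, ‖a t‖ * ‖b t‖ ≤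
      Real.sqrt (∫ t : ℝ, ‖a t‖ ^ 2) * Real.sqrt (∫ t : ℝ, ‖b t‖ ^ 2) := by
  have hpq : (2:ℝ).HolderConjugate 2 := Real.HolderConjugate.two_two
  have h2 : (ENNReal.ofReal (2:ℝ)) = 2 := by norm_num
  have hma : MemLp (fun t => ‖a t‖) (ENNReal.ofReal (2:ℝ)) (volume : Measure ℝ) := by
    rw [h2]; exact (ha.norm).memLp_of_hasCompactSupport (h'f := hsa.norm)
  have hmb : MemLp (fun t => ‖b t‖) (ENNReal.ofReal (2:ℝ)) (volume : Measure ℝ) := by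
    rw [h2]; exact (hb.norm).memLp_of_hasCompactSupport (h'f := hsb.norm)
  have := integral_mul_le_Lp_mul_Lq_of_nonneg hpq
    (Filter.Eventually.of_forall (fun t => norm_nonneg (a t)))
    (Filter.Eventually.of_forall (fun t => norm_nonneg (b t))) hma hmb
  have e1 : ∀ c : ℝ → ℂ, (∫ t : ℝ, ‖c t‖ ^ (2:ℝ)) = ∫ t : ℝ, ‖c t‖ ^ 2 := by
    intro c; congr 1 with t; rw [show ((2:ℝ) = ((2:ℕ):ℝ)) by norm_num, Real.rpow_natCast]
  rw [e1, e1] at this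
  calc ∫ t : ℝ, ‖a t‖ * ‖b t‖
      ≤ (∫ t : ℝ, ‖a t‖ ^ 2) ^ ((1:ℝ)/2) * (∫ t : ℝ, ‖b t‖ ^ 2) ^ ((1:ℝ)/2) := this
    _ = _ := by rw [Real.sqrt_eq_rpow, Real.sqrt_eq_rpow]


-- scalar main estimate
lemma scalar_est (m : ℝ → ℂ) (hmc : Continuous m) (R : ℝ) (hR : 0 < R)
    (hm0 : ∀ t : ℝ, R ≤ |t| → m t = 0) (B K : ℝ) (hB : 0 ≤ B) (hK : 0 ≤ K)
    (hbd : ∀ t : ℝ, ‖m t‖ ≤ B)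
    (δ : ℝ) (hδ0 : 0 < δ) (hδ1 : δ ≤ 1)
    (hcancel : ∀ k : ℤ, ‖∫ t in ((k:ℝ)*δ)..((k:ℝ)*δ+δ), m t‖ ≤ K*δ*δ)
    (φ ψ : ℝ → ℂ) (hφ : ContDiff ℝ 1 φ) (hφs : HasCompactSupport φ)
    (hψ : ContDiff ℝ 1 ψ) (hψs : HasCompactSupport ψ) :
    ‖∫ t : ℝ, φ t * (m t * ψ t)‖ ≤ (B + K) * δ *
      ((Real.sqrt (∫ t : ℝ, ‖φ t‖ ^ 2) + Real.sqrt (∫ t : ℝ, ‖deriv φ t‖ ^ 2)) *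
       (Real.sqrt (∫ t : ℝ, ‖ψ t‖ ^ 2) + Real.sqrt (∫ t : ℝ, ‖deriv ψ t‖ ^ 2))) := by
  set q : ℝ → ℂ := fun t => φ t * ψ t with hqdef
  set q' : ℝ → ℂ := fun t => deriv φ t * ψ t + φ t * deriv ψ t with hq'def
  have hφc := hφ.continuous
  have hψc := hψ.continuous
  have hφd : Continuous (deriv φ) := hφ.continuous_deriv le_rfl
  have hψd : Continuous (deriv ψ) := hψ.continuous_deriv le_rfl
  have hq : ∀ t, HasDerivAt q (q' t) t := fun t =>
    ((hφ.differentiable one_ne_zero t).hasDerivAt.mul (hψ.differentiable one_ne_zero t).hasDerivAt)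
  have hqc : Continuous q := hφc.mul hψc
  have hq'c : Continuous q' := (hφd.mul hψc).add (hφc.mul hψd)
  have hqs : HasCompactSupport q := hφs.mul_right
  have hq's : HasCompactSupport q' := (hφs.deriv.mul_right).add (hφs.mul_right)
  have int_nq : Integrable (fun t => ‖q t‖) := hqc.norm.integrable_of_hasCompactSupport hqs.norm
  have int_nq' : Integrable (fun t => ‖q' t‖) := hq'c.norm.integrable_of_hasCompactSupport hq's.norm
  -- the grid
  set N : ℕ := ⌈R/δ⌉₊ with hN
  have hRT : R ≤ (N:ℝ)*δ := by
    have := Nat.le_ceil (R/δ)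
    calc R = (R/δ)*δ := by field_simp
      _ ≤ (N:ℝ)*δ := by apply mul_le_mul_of_nonneg_right this hδ0.le
  set T : ℝ := (N:ℝ)*δ with hT
  have hT0 : 0 < T := lt_of_lt_of_le hR hRT
  set a : ℕ → ℝ := fun j => ((j:ℝ) - N) * δ with ha
  have ha0 : a 0 = -T := by simp only [ha, hT]; push_cast; ring
  have haN : a (2*N) = T := by simp only [ha, hT]; push_cast; ring
  have hstep : ∀ j : ℕ, a (j+1) = a j + δ := by intro j; simp only [ha]; push_cast; ring
  have hFc : Continuous (fun t => q t * m t) := hqc.mul hmc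
  -- reduce integral over ℝ to -T..T
  have hzero : ∀ t : ℝ, t ∉ Set.Ioc (-T) T → q t * m t = 0 := by
    intro t ht
    have : R ≤ |t| := by
      rcases not_and_or.mp (fun hc => ht ⟨hc.1, hc.2⟩) with h | h
      · push_neg at h; rw [abs_of_nonpos (by linarith)]; linarith
      · push_neg at h; rw [abs_of_pos (by linarith)]; linarith
    rw [hm0 t this, mul_zero]
  have hred : (∫ t : ℝ, q t * m t) = ∫ t in (-T)..T, q t * m t := by
    rw [integral_of_le (by linarith), ← setIntegral_eq_integral_of_forall_compl_eq_zero hzero]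
  have hint : ∀ j : ℕ, j < 2*N → IntervalIntegrable (fun t => q t * m t) volume (a j) (a (j+1)) :=
    fun j _ => hFc.intervalIntegrable _ _
  have hsum : (∫ t in (-T)..T, q t * m t)
      = ∑ j ∈ Finset.range (2*N), ∫ t in a j..a (j+1), q t * m t := by
    rw [sum_integral_adjacent_intervals hint, ha0, haN]
  -- per-interval quantities
  set D : ℕ → ℝ := fun j => ∫ t in a j..a j + δ, ‖q' t‖ with hD
  set P : ℕ → ℝ := fun j => ∫ t in a j..a j + δ, ‖q t‖ with hP
  have hDnn : ∀ j, 0 ≤ D j := fun j =>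
    intervalIntegral.integral_nonneg (by linarith) (fun t _ => norm_nonneg _)
  have hPnn : ∀ j, 0 ≤ P j := fun j =>
    intervalIntegral.integral_nonneg (by linarith) (fun t _ => norm_nonneg _)
  -- FTC bound
  have hqdiff : ∀ j : ℕ, ∀ t ∈ Set.Icc (a j) (a j + δ), ‖q t - q (a j)‖ ≤ D j := by
    intro j t ht
    have hftc : (∫ x in (a j)..t, q' x) = q t - q (a j) :=
      integral_eq_sub_of_hasDerivAt (fun x _ => hq x) (hq'c.intervalIntegrable _ _)
    rw [← hftc]
    calc ‖∫ x in (a j)..t, q' x‖ ≤ ∫ x in (a j)..t, ‖q' x‖ :=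
          norm_integral_le_integral_norm ht.1
      _ ≤ D j := integral_mono_interval le_rfl ht.1 ht.2
          (Filter.Eventually.of_forall fun x => norm_nonneg _)
          (hq'c.norm.intervalIntegrable _ _)
  -- the key per-interval estimate
  have key : ∀ j : ℕ, ‖∫ t in a j..a j + δ, q t * m t‖
      ≤ B*δ*(D j) + K*δ*(P j + δ*(D j)) := by
    intro j
    set c : ℝ := a j with hcdef
    have hsplit : (∫ t in c..c + δ, q t * m t)
        = (∫ t in c..c + δ, (q t - q c) * m t) + q c * ∫ t in c..c + δ, m t := by
      rw [← intervalIntegral.integral_const_mul, ← integral_add (f := fun t => (q t - q c) * m t)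
        (g := fun t => q c * m t)
        (((hqc.sub continuous_const).mul hmc).intervalIntegrable _ _)
        ((continuous_const.mul hmc).intervalIntegrable _ _)]
      congr 1 with t; ring
    have hb1 : ‖∫ t in c..c + δ, (q t - q c) * m t‖ ≤ (D j * B) * δ := by
      have := norm_integral_le_of_norm_le_const (C := D j * B) (a := c) (b := c + δ)
        (f := fun t => (q t - q c) * m t) (fun t ht => by
          rw [Set.uIoc_of_le (by linarith)] at ht
          have h1 : ‖q t - q c‖ ≤ D j := hqdiff j t ⟨ht.1.le, ht.2⟩
          calc ‖(q t - q c) * m t‖ = ‖q t - q c‖ * ‖m t‖ := norm_mul _ _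
            _ ≤ D j * B := mul_le_mul h1 (hbd t) (norm_nonneg _) (hDnn j))
      calc ‖∫ t in c..c + δ, (q t - q c) * m t‖ ≤ D j * B * |c + δ - c| := this
        _ = (D j * B) * δ := by rw [show c + δ - c = δ by ring, abs_of_pos hδ0]
    -- δ * ‖q c‖ ≤ P j + δ * D j
    have hqcb : δ * ‖q c‖ ≤ P j + δ * (D j) := by
      have hmono : (∫ t in c..c + δ, ‖q c‖) ≤ ∫ t in c..c + δ, (‖q t‖ + D j) := by
        apply integral_mono_on (by linarith)
          (continuous_const.intervalIntegrable _ _)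
          ((hqc.norm.add continuous_const).intervalIntegrable _ _)
        intro t ht
        have := hqdiff j t ht
        have h2 : ‖q c‖ - ‖q t‖ ≤ ‖q t - q c‖ := by
          rw [norm_sub_rev]; exact norm_sub_norm_le _ _
        show ‖q c‖ ≤ ‖q t‖ + D j
        linarith
      have e1 : (∫ t in c..c + δ, (‖q c‖ : ℝ)) = δ * ‖q c‖ := by
        rw [intervalIntegral.integral_const, show c + δ - c = δ by ring, smul_eq_mul]
      have e2 : (∫ t in c..c + δ, (‖q t‖ + D j)) = P j + δ * D j := by
        rw [integral_add (hqc.norm.intervalIntegrable _ _)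
          (continuous_const.intervalIntegrable _ _), intervalIntegral.integral_const,
          show c + δ - c = δ by ring, smul_eq_mul]
      rw [e1, e2] at hmono
      exact hmono
    obtain ⟨k, hk⟩ : ∃ k : ℤ, (k:ℝ)*δ = c := ⟨(j:ℤ) - (N:ℤ), by push_cast [hcdef, ha]; ring⟩
    have hcan := hcancel k
    rw [hk] at hcan
    have hb2 : ‖q c * ∫ t in c..c + δ, m t‖ ≤ K*δ*(P j + δ*(D j)) := by
      rw [norm_mul]
      calc ‖q c‖ * ‖∫ t in c..c + δ, m t‖ ≤ ‖q c‖ * (K*δ*δ) :=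
            mul_le_mul_of_nonneg_left hcan (norm_nonneg _)
        _ = K*δ*(δ*‖q c‖) := by ring
        _ ≤ K*δ*(P j + δ*(D j)) := by
            apply mul_le_mul_of_nonneg_left hqcb (by positivity)
    calc ‖∫ t in c..c + δ, q t * m t‖
        ≤ ‖∫ t in c..c + δ, (q t - q c) * m t‖ + ‖q c * ∫ t in c..c + δ, m t‖ := by
          rw [hsplit]; exact norm_add_le _ _
      _ ≤ B*δ*(D j) + K*δ*(P j + δ*(D j)) := by
          refine add_le_add ?_ hb2
          calc ‖∫ t in c..c + δ, (q t - q c) * m t‖ ≤ D j * B * δ := hb1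
            _ = B*δ*(D j) := by ring
  -- summation
  set SD : ℝ := ∑ j ∈ Finset.range (2*N), D j with hSDdef
  set SP : ℝ := ∑ j ∈ Finset.range (2*N), P j with hSPdef
  have hSDnn : 0 ≤ SD := Finset.sum_nonneg (fun j _ => hDnn j)
  have hSPnn : 0 ≤ SP := Finset.sum_nonneg (fun j _ => hPnn j)
  set Dtot : ℝ := ∫ t : ℝ, ‖q' t‖ with hDtot
  set Ptot : ℝ := ∫ t : ℝ, ‖q t‖ with hPtot
  have hSD : SD ≤ Dtot := by
    have h1 : SD = ∫ t in (-T)..T, ‖q' t‖ := by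
      rw [hSDdef, hD]
      simp only [← hstep]
      rw [sum_integral_adjacent_intervals (fun j _ => hq'c.norm.intervalIntegrable _ _), ha0, haN]
    rw [h1, integral_of_le (by linarith)]
    exact setIntegral_le_integral int_nq' (Filter.Eventually.of_forall fun t => norm_nonneg _)
  have hSP : SP ≤ Ptot := by
    have h1 : SP = ∫ t in (-T)..T, ‖q t‖ := by
      rw [hSPdef, hP]
      simp only [← hstep]
      rw [sum_integral_adjacent_intervals (fun j _ => hqc.norm.intervalIntegrable _ _), ha0, haN]
    rw [h1, integral_of_le (by linarith)]
    exact setIntegral_le_integral int_nq (Filter.Eventually.of_forall fun t => norm_nonneg _)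
  have hDtotnn : 0 ≤ Dtot := le_trans hSDnn hSD
  have hPtotnn : 0 ≤ Ptot := le_trans hSPnn hSP
  have hItot : ‖∫ t : ℝ, φ t * (m t * ψ t)‖ ≤ B*δ*SD + K*δ*(SP + δ*SD) := by
    have hee : (fun t : ℝ => φ t * (m t * ψ t)) = fun t => q t * m t :=
      funext fun t => by rw [hqdef]; ring
    rw [hee, hred, hsum]
    calc ‖∑ j ∈ Finset.range (2*N), ∫ t in a j..a (j+1), q t * m t‖
        ≤ ∑ j ∈ Finset.range (2*N), ‖∫ t in a j..a (j+1), q t * m t‖ :=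
          norm_sum_le _ _
      _ ≤ ∑ j ∈ Finset.range (2*N), (B*δ*(D j) + K*δ*(P j + δ*(D j))) := by
          refine Finset.sum_le_sum (fun j _ => ?_)
          rw [hstep j]; exact key j
      _ = B*δ*SD + K*δ*(SP + δ*SD) := by
          have he : ∀ j, B*δ*(D j) + K*δ*(P j + δ*(D j))
              = (B*δ)*D j + ((K*δ)*P j + (K*δ*δ)*D j) := fun j => by ring
          simp only [he]
          rw [Finset.sum_add_distrib, Finset.sum_add_distrib, ← Finset.mul_sum,
            ← Finset.mul_sum, ← Finset.mul_sum, ← hSDdef, ← hSPdef]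
          ring
  -- Cauchy-Schwarz stage
  set a1 : ℝ := Real.sqrt (∫ t : ℝ, ‖φ t‖ ^ 2) with ha1
  set a2 : ℝ := Real.sqrt (∫ t : ℝ, ‖deriv φ t‖ ^ 2) with ha2
  set b1 : ℝ := Real.sqrt (∫ t : ℝ, ‖ψ t‖ ^ 2) with hb1'
  set b2 : ℝ := Real.sqrt (∫ t : ℝ, ‖deriv ψ t‖ ^ 2) with hb2'
  have ha1nn : 0 ≤ a1 := Real.sqrt_nonneg _
  have ha2nn : 0 ≤ a2 := Real.sqrt_nonneg _
  have hb1nn : 0 ≤ b1 := Real.sqrt_nonneg _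
  have hb2nn : 0 ≤ b2 := Real.sqrt_nonneg _
  have hPcs : Ptot ≤ a1 * b1 := by
    have : Ptot = ∫ t : ℝ, ‖φ t‖ * ‖ψ t‖ := by
      rw [hPtot]; congr 1 with t; rw [hqdef]; exact norm_mul _ _
    rw [this]; exact myCS φ ψ hφc hψc hφs hψs
  have hDcs : Dtot ≤ a2 * b1 + a1 * b2 := by
    have hint1 : Integrable (fun t : ℝ => ‖deriv φ t‖ * ‖ψ t‖) :=
      (hφd.norm.mul hψc.norm).integrable_of_hasCompactSupport
        ((hφs.deriv.norm).mul_right)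
    have hint2 : Integrable (fun t : ℝ => ‖φ t‖ * ‖deriv ψ t‖) :=
      (hφc.norm.mul hψd.norm).integrable_of_hasCompactSupport (hφs.norm.mul_right)
    have hpw : ∀ t : ℝ, ‖q' t‖ ≤ ‖deriv φ t‖ * ‖ψ t‖ + ‖φ t‖ * ‖deriv ψ t‖ := by
      intro t
      calc ‖q' t‖ ≤ ‖deriv φ t * ψ t‖ + ‖φ t * deriv ψ t‖ := norm_add_le _ _
        _ = ‖deriv φ t‖ * ‖ψ t‖ + ‖φ t‖ * ‖deriv ψ t‖ := by rw [norm_mul, norm_mul]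
    calc Dtot ≤ ∫ t : ℝ, (‖deriv φ t‖ * ‖ψ t‖ + ‖φ t‖ * ‖deriv ψ t‖) := by
          rw [hDtot]
          exact integral_mono int_nq' (hint1.add hint2) hpw
      _ = (∫ t : ℝ, ‖deriv φ t‖ * ‖ψ t‖) + ∫ t : ℝ, ‖φ t‖ * ‖deriv ψ t‖ :=
          integral_add hint1 hint2
      _ ≤ a2 * b1 + a1 * b2 :=
          add_le_add (myCS _ ψ hφd hψc hφs.deriv hψs) (myCS φ _ hφc hψd hφs hψs.deriv)
  calc ‖∫ t : ℝ, φ t * (m t * ψ t)‖ ≤ B*δ*SD + K*δ*(SP + δ*SD) := hItot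
    _ ≤ δ * ((B + K) * (Ptot + Dtot)) := by
        have h1 : B*δ*SD ≤ B*δ*Dtot := mul_le_mul_of_nonneg_left hSD (by positivity)
        have h2 : K*δ*SP ≤ K*δ*Ptot := mul_le_mul_of_nonneg_left hSP (by positivity)
        have h3 : δ*SD ≤ Dtot := le_trans (by nlinarith) hSD
        have h4 : K*δ*(δ*SD) ≤ K*δ*Dtot := mul_le_mul_of_nonneg_left h3 (by positivity)
        nlinarith [mul_nonneg (mul_nonneg hB hδ0.le) hPtotnn,
          mul_nonneg (mul_nonneg hK hδ0.le) hDtotnn]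
    _ ≤ (B + K) * δ * ((a1 + a2) * (b1 + b2)) := by
        rw [show (B+K)*δ*((a1+a2)*(b1+b2)) = δ*((B+K)*((a1+a2)*(b1+b2))) by ring]
        apply mul_le_mul_of_nonneg_left _ hδ0.le
        apply mul_le_mul_of_nonneg_left _ (by linarith : (0:ℝ) ≤ B + K)
        nlinarith [mul_nonneg ha2nn hb2nn]

lemma cancel_est (u : ℝ → ℝ → ℂ) (u0 : ℝ → ℂ) (hu0 : ∀ t, u0 t = ∫ τ in (0:ℝ)..1, u τ t)
    (hcont : Continuous fun p : ℝ × ℝ => u p.1 p.2) (hper : ∀ τ t : ℝ, u (τ + 1) t = u τ t)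
    (hu0c : Continuous u0)
    (L : ℝ) (hL0 : 0 ≤ L) (hL : ∀ τ t s : ℝ, ‖u τ t - u τ s‖ ≤ L * |t - s|)
    (hLu0 : ∀ t s : ℝ, ‖u0 t - u0 s‖ ≤ L * |t - s|)
    (δ : ℝ) (hδ : 0 < δ) (k : ℤ) :
    ‖∫ t in ((k:ℝ)*δ)..((k:ℝ)*δ+δ), (u (t/δ) t - u0 t)‖ ≤ 2*L*δ*δ := by
  set c : ℝ := (k:ℝ)*δ with hc
  have hcu : Continuous fun t : ℝ => u (t/δ) t :=
    hcont.comp ((continuous_id.div_const δ).prodMk continuous_id)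
  have hcu2 : Continuous fun t : ℝ => u (t/δ) c :=
    hcont.comp ((continuous_id.div_const δ).prodMk continuous_const)
  have hcuc : ∀ s : ℝ, Continuous fun τ : ℝ => u τ s := fun s =>
    hcont.comp (continuous_id.prodMk continuous_const)
  have hsplit : (∫ t in c..(c+δ), (u (t/δ) t - u0 t)) =
      (∫ t in c..(c+δ), (u (t/δ) t - u (t/δ) c))
      + (∫ t in c..(c+δ), (u (t/δ) c - u0 c))
      + (∫ t in c..(c+δ), (u0 c - u0 t)) := by
    rw [← integral_add (f := fun t => u (t/δ) t - u (t/δ) c) (g := fun t => u (t/δ) c - u0 c)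
      ((hcu.sub hcu2).intervalIntegrable _ _)
      ((hcu2.sub continuous_const).intervalIntegrable _ _),
      ← integral_add (f := fun t => (u (t/δ) t - u (t/δ) c) + (u (t/δ) c - u0 c))
      (g := fun t => u0 c - u0 t) (((hcu.sub hcu2).add (hcu2.sub continuous_const)).intervalIntegrable _ _)
      ((continuous_const.sub hu0c).intervalIntegrable _ _)]
    congr 1 with t; ring
  have hJ2 : (∫ t in c..(c+δ), (u (t/δ) c - u0 c)) = 0 := by
    have h1 : (∫ t in c..(c+δ), (u (t/δ) c - u0 c))
        = δ • ∫ τ in c/δ..(c+δ)/δ, (u τ c - u0 c) :=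
      integral_comp_div (f := fun τ => u τ c - u0 c) hδ.ne'
    have hck : c/δ = (k:ℝ) := by rw [hc, mul_div_assoc, div_self hδ.ne', mul_one]
    have hck2 : (c+δ)/δ = (k:ℝ) + 1 := by field_simp; ring
    have hp : Function.Periodic (fun τ => u τ c - u0 c) 1 := fun x => by simp [hper]
    have h2 : (∫ τ in (k:ℝ)..((k:ℝ)+1), (u τ c - u0 c))
        = ∫ τ in (0:ℝ)..(0:ℝ)+1, (u τ c - u0 c) := hp.intervalIntegral_add_eq (k:ℝ) 0
    have h3 : (∫ τ in (0:ℝ)..1, (u τ c - u0 c)) = 0 := by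
      rw [integral_sub ((hcuc c).intervalIntegrable _ _)
        (continuous_const.intervalIntegrable _ _), intervalIntegral.integral_const, ← hu0 c]
      simp
    rw [h1, hck, hck2, h2, zero_add, h3, smul_zero]
  have hmem : ∀ t ∈ Set.uIoc c (c+δ), |t - c| ≤ δ := by
    intro t ht
    rw [Set.uIoc_of_le (by linarith)] at ht
    rw [abs_le]; constructor <;> [linarith [ht.1]; linarith [ht.2]]
  have hJ1 : ‖∫ t in c..(c+δ), (u (t/δ) t - u (t/δ) c)‖ ≤ L*δ*δ := by
    have := norm_integral_le_of_norm_le_const (C := L*δ) (a := c) (b := c+δ)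
      (f := fun t => u (t/δ) t - u (t/δ) c) (fun t ht => by
        calc ‖u (t/δ) t - u (t/δ) c‖ ≤ L * |t - c| := hL _ _ _
          _ ≤ L * δ := by nlinarith [hmem t ht, abs_nonneg (t - c)])
    calc ‖_‖ ≤ L*δ * |c+δ-c| := this
      _ = L*δ*δ := by rw [show c+δ-c = δ by ring, abs_of_pos hδ]
  have hJ3 : ‖∫ t in c..(c+δ), (u0 c - u0 t)‖ ≤ L*δ*δ := by
    have := norm_integral_le_of_norm_le_const (C := L*δ) (a := c) (b := c+δ)
      (f := fun t => u0 c - u0 t) (fun t ht => by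
        calc ‖u0 c - u0 t‖ = ‖u0 t - u0 c‖ := by rw [norm_sub_rev]
          _ ≤ L * |t - c| := hLu0 _ _
          _ ≤ L * δ := by nlinarith [hmem t ht, abs_nonneg (t - c)])
    calc ‖_‖ ≤ L*δ * |c+δ-c| := this
      _ = L*δ*δ := by rw [show c+δ-c = δ by ring, abs_of_pos hδ]
  calc ‖∫ t in c..(c+δ), (u (t/δ) t - u0 t)‖
      = ‖(∫ t in c..(c+δ), (u (t/δ) t - u (t/δ) c))
        + (∫ t in c..(c+δ), (u (t/δ) c - u0 c))
        + (∫ t in c..(c+δ), (u0 c - u0 t))‖ := by rw [hsplit]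
    _ ≤ ‖(∫ t in c..(c+δ), (u (t/δ) t - u (t/δ) c))
        + (∫ t in c..(c+δ), (u (t/δ) c - u0 c))‖
        + ‖∫ t in c..(c+δ), (u0 c - u0 t)‖ := norm_add_le _ _
    _ ≤ ‖∫ t in c..(c+δ), (u (t/δ) t - u (t/δ) c)‖
        + ‖∫ t in c..(c+δ), (u (t/δ) c - u0 c)‖
        + ‖∫ t in c..(c+δ), (u0 c - u0 t)‖ := by gcongr; exact norm_add_le _ _
    _ ≤ L*δ*δ + 0 + L*δ*δ := by
        refine add_le_add (add_le_add hJ1 (by rw [hJ2]; simp)) hJ3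
    _ = 2*L*δ*δ := by ring

-- periodic bound lemma
lemma aux_bound (w : ℝ → ℝ → ℂ) (hw : Continuous fun p : ℝ × ℝ => w p.1 p.2)
    (hper : ∀ τ t : ℝ, w (τ + 1) t = w τ t) (R' : ℝ)
    (h0 : ∀ τ t : ℝ, R' < |t| → w τ t = 0) :
    ∃ M ≥ 0, ∀ τ t : ℝ, ‖w τ t‖ ≤ M := by
  obtain ⟨M, hM⟩ := (((isCompact_Icc (a := (0:ℝ)) (b := 1)).prod
      (isCompact_Icc (a := -(R'+1)) (b := R'+1)))).exists_bound_of_continuousOn hw.continuousOn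
  refine ⟨max M 0, le_max_right _ _, fun τ t => ?_⟩
  by_cases h : |t| ≤ R' + 1
  · have hτ : w τ t = w (Int.fract τ) t := by
      have hp : Function.Periodic (fun s => w s t) 1 := fun s => hper s t
      have h2 := hp.sub_int_mul_eq (x := τ) ⌊τ⌋
      rw [mul_one, Int.self_sub_floor] at h2
      exact h2.symm
    rw [hτ]
    have habs := abs_le.mp h
    have : ((Int.fract τ, t) : ℝ × ℝ) ∈ Set.Icc (0:ℝ) 1 ×ˢ Set.Icc (-(R'+1)) (R'+1) :=
      Set.mem_prod.mpr ⟨Set.mem_Icc.mpr ⟨Int.fract_nonneg τ, (Int.fract_lt_one τ).le⟩,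
        Set.mem_Icc.mpr ⟨habs.1, habs.2⟩⟩
    have h3 : ‖w (Int.fract τ) t‖ ≤ M := by simpa using hM (Int.fract τ, t) this
    exact le_max_of_le_left h3
  · rw [h0 τ t (by push_neg at h; linarith)]
    simp

lemma entry_est (u : ℝ → ℝ → ℂ) (hu : ContDiff ℝ (⊤ : ℕ∞) fun p : ℝ × ℝ => u p.1 p.2)
    (hper : ∀ τ t : ℝ, u (τ + 1) t = u τ t)
    (R : ℝ) (hR : 0 < R) (hsupp : ∀ τ t : ℝ, R ≤ |t| → u τ t = 0)
    (u0 : ℝ → ℂ) (hu0 : ∀ t, u0 t = ∫ τ in (0:ℝ)..1, u τ t) :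
    ∃ C > 0, ∀ δ : ℝ, δ ∈ Set.Ioo (0:ℝ) 1 → ∀ φ ψ : ℝ → ℂ,
      ContDiff ℝ 1 φ → HasCompactSupport φ → ContDiff ℝ 1 ψ → HasCompactSupport ψ →
      ‖∫ t : ℝ, φ t * ((u (t/δ) t - u0 t) * ψ t)‖ ≤ C * δ *
        ((Real.sqrt (∫ t : ℝ, ‖φ t‖ ^ 2) + Real.sqrt (∫ t : ℝ, ‖deriv φ t‖ ^ 2)) *
         (Real.sqrt (∫ t : ℝ, ‖ψ t‖ ^ 2) + Real.sqrt (∫ t : ℝ, ‖deriv ψ t‖ ^ 2))) := by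
  have hFc : Continuous fun p : ℝ × ℝ => u p.1 p.2 := hu.continuous
  -- bound on u
  obtain ⟨M, hM0, hM⟩ := aux_bound u hFc hper R (fun τ t h => hsupp τ t h.le)
  -- derivative in second variable
  set Dfn : ℝ × ℝ → ℂ := fun p => fderiv ℝ (fun p : ℝ × ℝ => u p.1 p.2) p (0, 1) with hDfn
  have hder : ∀ τ t : ℝ, HasDerivAt (u τ) (Dfn (τ, t)) t := by
    intro τ t
    have h1 : HasDerivAt (fun s : ℝ => (τ, s)) ((0 : ℝ), (1 : ℝ)) t := by
      simpa using (hasDerivAt_const t τ).prodMk (hasDerivAt_id t)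
    exact ((hu.differentiable (by simp) (τ, t)).hasFDerivAt.comp_hasDerivAt t h1)
  have hDcont : Continuous Dfn := by
    have h := (hu.fderiv_right (m := (⊤ : ℕ∞)) le_rfl).continuous
    exact (ContinuousLinearMap.apply ℝ ℂ ((0:ℝ), (1:ℝ))).continuous.comp h
  have hDper : ∀ τ t : ℝ, Dfn (τ + 1, t) = Dfn (τ, t) := by
    intro τ t
    have h1 : u (τ + 1) = u τ := funext fun s => hper τ s
    have h2 : HasDerivAt (u τ) (Dfn (τ + 1, t)) t := h1 ▸ hder (τ+1) t
    exact h2.unique (hder τ t)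
  have hDsupp : ∀ τ t : ℝ, R < |t| → Dfn (τ, t) = 0 := by
    intro τ t h
    have hop : IsOpen {s : ℝ | R < |s|} := isOpen_lt continuous_const continuous_abs
    have hev : u τ =ᶠ[nhds t] (fun _ => (0:ℂ)) :=
      Filter.eventually_of_mem (hop.mem_nhds h) (fun s hs => hsupp τ s (le_of_lt hs))
    have h1 : deriv (u τ) t = deriv (fun _ : ℝ => (0:ℂ)) t := hev.deriv_eq
    rw [deriv_const] at h1
    rw [← (hder τ t).deriv]
    exact h1
  obtain ⟨L, hL0, hL⟩ := aux_bound (fun τ t => Dfn (τ, t))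
    (by simpa using hDcont) (fun τ t => hDper τ t) R (fun τ t h => hDsupp τ t h)
  have hLip : ∀ τ t s : ℝ, ‖u τ t - u τ s‖ ≤ L * |t - s| := by
    intro τ t s
    have := Convex.norm_image_sub_le_of_norm_deriv_le (𝕜 := ℝ) (f := u τ) (s := Set.univ)
      (fun x _ => (hder τ x).differentiableAt)
      (fun x _ => by rw [(hder τ x).deriv]; exact hL τ x)
      convex_univ (Set.mem_univ s) (Set.mem_univ t)
    simpa [Real.norm_eq_abs] using this
  have hcuc : ∀ s : ℝ, Continuous fun τ : ℝ => u τ s := fun s =>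
    hFc.comp (continuous_id.prodMk continuous_const)
  have hu0M : ∀ t : ℝ, ‖u0 t‖ ≤ M := by
    intro t
    rw [hu0 t]
    have := norm_integral_le_of_norm_le_const (C := M) (a := (0:ℝ)) (b := 1)
      (f := fun τ => u τ t) (fun τ _ => hM τ t)
    simpa using this
  have hu0L : ∀ t s : ℝ, ‖u0 t - u0 s‖ ≤ L * |t - s| := by
    intro t s
    rw [hu0 t, hu0 s, ← integral_sub ((hcuc t).intervalIntegrable _ _)
      ((hcuc s).intervalIntegrable _ _)]
    have := norm_integral_le_of_norm_le_const (C := L * |t - s|) (a := (0:ℝ)) (b := 1)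
      (f := fun τ => u τ t - u τ s) (fun τ _ => hLip τ t s)
    simpa using this
  have hu0c : Continuous u0 := by
    have : LipschitzWith (Real.toNNReal L) u0 := by
      apply LipschitzWith.of_dist_le_mul
      intro x y
      rw [dist_eq_norm, Real.coe_toNNReal L hL0, Real.dist_eq]
      exact hu0L x y
    exact this.continuous
  refine ⟨2*M + 2*L + 1, by positivity, ?_⟩
  rintro δ ⟨hδ0, hδ1⟩ φ ψ hφ hφs hψ hψs
  set m : ℝ → ℂ := fun t => u (t/δ) t - u0 t with hm
  have hmc : Continuous m :=
    (hFc.comp ((continuous_id.div_const δ).prodMk continuous_id)).sub hu0c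
  have hm0 : ∀ t : ℝ, R ≤ |t| → m t = 0 := by
    intro t ht
    have h1 : u0 t = 0 := by
      rw [hu0 t]
      rw [intervalIntegral.integral_congr (g := fun _ => (0:ℂ))
        (fun τ _ => hsupp τ t ht)]
      simp
    simp only [hm, hsupp (t/δ) t ht, h1, sub_zero]
  have hbd : ∀ t : ℝ, ‖m t‖ ≤ M + M := fun t =>
    (norm_sub_le _ _).trans (add_le_add (hM _ _) (hu0M _))
  have hcancel : ∀ k : ℤ, ‖∫ t in ((k:ℝ)*δ)..((k:ℝ)*δ+δ), m t‖ ≤ (2*L)*δ*δ := by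
    intro k
    have := cancel_est u u0 hu0 hFc hper hu0c L hL0 hLip hu0L δ hδ0 k
    calc ‖∫ t in ((k:ℝ)*δ)..((k:ℝ)*δ+δ), m t‖ ≤ 2*L*δ*δ := this
      _ = (2*L)*δ*δ := by ring
  have hmain := scalar_est m hmc R hR hm0 (M+M) (2*L) (by linarith) (by linarith) hbd
    δ hδ0 hδ1.le hcancel φ ψ hφ hφs hψ hψs
  have hXY : 0 ≤ (Real.sqrt (∫ t : ℝ, ‖φ t‖ ^ 2) + Real.sqrt (∫ t : ℝ, ‖deriv φ t‖ ^ 2)) *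
      (Real.sqrt (∫ t : ℝ, ‖ψ t‖ ^ 2) + Real.sqrt (∫ t : ℝ, ‖deriv ψ t‖ ^ 2)) := by positivity
  calc ‖∫ t : ℝ, φ t * ((u (t/δ) t - u0 t) * ψ t)‖
      = ‖∫ t : ℝ, φ t * (m t * ψ t)‖ := rfl
    _ ≤ (M + M + 2*L) * δ * _ := hmain
    _ ≤ (2*M + 2*L + 1) * δ * _ := by
        apply mul_le_mul_of_nonneg_right _ hXY
        apply mul_le_mul_of_nonneg_right _ hδ0.le
        linarith


/-- The `H¹` norm `‖f‖_{L²} + ‖f'‖_{L²}` of a (compactly supported `C¹`) function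
`f : ℝ → ℂ²`, with the Euclidean norm on `ℂ²`. -/
noncomputable def H1norm (f : ℝ → Fin 2 → ℂ) : ℝ :=
  Real.sqrt (∫ t : ℝ, ∑ i, ‖f t i‖ ^ 2) + Real.sqrt (∫ t : ℝ, ∑ i, ‖deriv f t i‖ ^ 2)

/-- Quantitative `H¹ → H⁻¹` estimate for the highly oscillatory difference
`U(t/δ, t) − U⁰(t)` (equation (1l) of the paper). -/
theorem stmt4
    (U : ℝ → ℝ → Matrix (Fin 2) (Fin 2) ℂ)
    (hUsmooth : ∀ i j, ContDiff ℝ (⊤ : ℕ∞) fun p : ℝ × ℝ => U p.1 p.2 i j)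
    (hUper : ∀ τ t : ℝ, U (τ + 1) t = U τ t)
    (R : ℝ) (hR : 0 < R) (hUsupp : ∀ τ t : ℝ, R ≤ |t| → U τ t = 0)
    (U0 : ℝ → Matrix (Fin 2) (Fin 2) ℂ)
    (hU0 : ∀ t i j, U0 t i j = ∫ τ in (0 : ℝ)..1, U τ t i j) :
    ∃ C > 0, ∀ δ : ℝ, δ ∈ Set.Ioo (0 : ℝ) 1 →
      ∀ f g : ℝ → Fin 2 → ℂ, ContDiff ℝ 1 f → HasCompactSupport f →
        ContDiff ℝ 1 g → HasCompactSupport g →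
        ‖∫ t : ℝ, ∑ i, (starRingEnd ℂ) (f t i) * ((U (t / δ) t - U0 t).mulVec (g t) i)‖ ≤
          C * δ * H1norm f * H1norm g := by
  have H : ∀ i j : Fin 2, ∃ C > 0, ∀ δ : ℝ, δ ∈ Set.Ioo (0:ℝ) 1 → ∀ φ ψ : ℝ → ℂ,
      ContDiff ℝ 1 φ → HasCompactSupport φ → ContDiff ℝ 1 ψ → HasCompactSupport ψ →
      ‖∫ t : ℝ, φ t * ((U (t/δ) t i j - U0 t i j) * ψ t)‖ ≤ C * δ *
        ((Real.sqrt (∫ t : ℝ, ‖φ t‖ ^ 2) + Real.sqrt (∫ t : ℝ, ‖deriv φ t‖ ^ 2)) *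
         (Real.sqrt (∫ t : ℝ, ‖ψ t‖ ^ 2) + Real.sqrt (∫ t : ℝ, ‖deriv ψ t‖ ^ 2))) := by
    intro i j
    exact entry_est (fun τ t => U τ t i j) (hUsmooth i j)
      (fun τ t => by show U (τ+1) t i j = U τ t i j; rw [hUper]) R hR
      (fun τ t h => by show U τ t i j = 0; rw [hUsupp τ t h]; rfl)
      (fun t => U0 t i j) (fun t => hU0 t i j)
  choose C hCpos hC using H
  refine ⟨∑ i : Fin 2, ∑ j : Fin 2, C i j,
    Finset.sum_pos (fun i _ => Finset.sum_pos (fun j _ => hCpos i j) Finset.univ_nonempty)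
      Finset.univ_nonempty, ?_⟩
  rintro δ hδ f g hf hfs hg hgs
  have hδ0 := hδ.1
  -- components
  set φ : Fin 2 → ℝ → ℂ := fun i t => (starRingEnd ℂ) (f t i) with hφdef
  set ψ : Fin 2 → ℝ → ℂ := fun j t => g t j with hψdef
  have hprojf : ∀ (h : ℝ → Fin 2 → ℂ), ContDiff ℝ 1 h → ∀ i t,
      HasDerivAt (fun s => h s i) (deriv h t i) t := by
    intro h hh i t
    exact (ContinuousLinearMap.proj (R := ℝ) (φ := fun _ : Fin 2 => ℂ) i).hasFDerivAt.comp_hasDerivAt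
      t (hh.differentiable one_ne_zero t).hasDerivAt
  have hφC1 : ∀ i, ContDiff ℝ 1 (φ i) := by
    intro i
    exact Complex.conjCLE.toContinuousLinearMap.contDiff.comp
      ((ContinuousLinearMap.proj (R := ℝ) (φ := fun _ : Fin 2 => ℂ) i).contDiff.comp hf)
  have hψC1 : ∀ j, ContDiff ℝ 1 (ψ j) := by
    intro j
    exact (ContinuousLinearMap.proj (R := ℝ) (φ := fun _ : Fin 2 => ℂ) j).contDiff.comp hg
  have hφS : ∀ i, HasCompactSupport (φ i) := fun i =>
    hfs.comp_left (g := fun v : Fin 2 → ℂ => (starRingEnd ℂ) (v i)) (by simp)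
  have hψS : ∀ j, HasCompactSupport (ψ j) := fun j =>
    hgs.comp_left (g := fun v : Fin 2 → ℂ => v j) rfl
  have hφder : ∀ i t, deriv (φ i) t = (starRingEnd ℂ) (deriv f t i) := by
    intro i t
    have h2 := hprojf f hf i t
    have h3 : HasDerivAt (φ i) (Complex.conjCLE (deriv f t i)) t :=
      Complex.conjCLE.toContinuousLinearMap.hasFDerivAt.comp_hasDerivAt t h2
    simpa using h3.deriv
  have hψder : ∀ j t, deriv (ψ j) t = deriv g t j := fun j t => (hprojf g hg j t).deriv
  -- sqrt comparisons
  have hsq : ∀ (h : ℝ → Fin 2 → ℂ), Continuous h → HasCompactSupport h → ∀ i : Fin 2,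
      (∫ t : ℝ, ‖h t i‖ ^ 2) ≤ ∫ t : ℝ, ∑ k, ‖h t k‖ ^ 2 := by
    intro h hc hcs i
    have intA : Integrable (fun t : ℝ => ‖h t i‖ ^ 2) :=
      Continuous.integrable_of_hasCompactSupport (f := fun t : ℝ => ‖h t i‖ ^ 2)
        (((continuous_apply i).comp hc).norm.pow 2)
        (hcs.comp_left (g := fun v : Fin 2 → ℂ => ‖v i‖ ^ 2) (by simp))
    have intB : Integrable (fun t : ℝ => ∑ k, ‖h t k‖ ^ 2) := by
      apply Continuous.integrable_of_hasCompactSupport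
      · exact continuous_finset_sum _ (fun k _ => ((continuous_apply k).comp hc).norm.pow 2)
      · exact hcs.comp_left (g := fun v : Fin 2 → ℂ => ∑ k, ‖v k‖ ^ 2) (by simp)
    apply integral_mono intA intB
    intro t
    exact Finset.single_le_sum (f := fun k => ‖h t k‖ ^ 2)
      (fun k _ => by positivity) (Finset.mem_univ i)
  have hφX : ∀ i : Fin 2,
      Real.sqrt (∫ t : ℝ, ‖φ i t‖ ^ 2) + Real.sqrt (∫ t : ℝ, ‖deriv (φ i) t‖ ^ 2)
        ≤ H1norm f := by
    intro i
    have e1 : (∫ t : ℝ, ‖φ i t‖ ^ 2) = ∫ t : ℝ, ‖f t i‖ ^ 2 := by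
      congr 1 with t; rw [hφdef]; simp [RCLike.norm_conj]
    have e2 : (∫ t : ℝ, ‖deriv (φ i) t‖ ^ 2) = ∫ t : ℝ, ‖deriv f t i‖ ^ 2 := by
      congr 1 with t; rw [hφder i t]; simp [RCLike.norm_conj]
    rw [H1norm, e1, e2]
    have hdc : Continuous (deriv f) := hf.continuous_deriv le_rfl
    exact add_le_add
      (Real.sqrt_le_sqrt (hsq f hf.continuous hfs i))
      (Real.sqrt_le_sqrt (hsq (deriv f) hdc hfs.deriv i))
  have hψX : ∀ j : Fin 2,
      Real.sqrt (∫ t : ℝ, ‖ψ j t‖ ^ 2) + Real.sqrt (∫ t : ℝ, ‖deriv (ψ j) t‖ ^ 2)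
        ≤ H1norm g := by
    intro j
    have e2 : (∫ t : ℝ, ‖deriv (ψ j) t‖ ^ 2) = ∫ t : ℝ, ‖deriv g t j‖ ^ 2 := by
      congr 1 with t; rw [hψder j t]
    rw [H1norm, e2]
    have hdc : Continuous (deriv g) := hg.continuous_deriv le_rfl
    exact add_le_add
      (Real.sqrt_le_sqrt (hsq g hg.continuous hgs j))
      (Real.sqrt_le_sqrt (hsq (deriv g) hdc hgs.deriv j))
  have hH1f : 0 ≤ H1norm f := by rw [H1norm]; positivity
  have hH1g : 0 ≤ H1norm g := by rw [H1norm]; positivity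
  -- continuity of entries
  have hUc : ∀ i j : Fin 2, Continuous (fun t : ℝ => U (t/δ) t i j) := by
    intro i j
    exact (hUsmooth i j).continuous.comp ((continuous_id.div_const δ).prodMk continuous_id)
  have hU0c : ∀ i j : Fin 2, Continuous (fun t : ℝ => U0 t i j) := by
    intro i j
    have hcc : Continuous (Function.uncurry fun t τ : ℝ => U τ t i j) :=
      (hUsmooth i j).continuous.comp ((continuous_snd).prodMk continuous_fst)
    have := intervalIntegral.continuous_parametric_intervalIntegral_of_continuous'
      (μ := volume) hcc 0 1
    exact this.congr (fun t => (hU0 t i j).symm)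
  -- integrand expansion
  have hexp : (∫ t : ℝ, ∑ i, (starRingEnd ℂ) (f t i) * ((U (t / δ) t - U0 t).mulVec (g t) i))
      = ∑ i : Fin 2, ∑ j : Fin 2,
          ∫ t : ℝ, φ i t * ((U (t/δ) t i j - U0 t i j) * ψ j t) := by
    have hInt : ∀ i j : Fin 2,
        Integrable (fun t : ℝ => φ i t * ((U (t/δ) t i j - U0 t i j) * ψ j t)) := by
      intro i j
      apply Continuous.integrable_of_hasCompactSupport
      · exact ((hφC1 i).continuous).mul (((hUc i j).sub (hU0c i j)).mul (hψC1 j).continuous)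
      · exact ((hφS i).mul_right)
    have e1 : ∀ t : ℝ, (∑ i, (starRingEnd ℂ) (f t i) * ((U (t / δ) t - U0 t).mulVec (g t) i))
        = ∑ i : Fin 2, ∑ j : Fin 2, φ i t * ((U (t/δ) t i j - U0 t i j) * ψ j t) := by
      intro t
      refine Finset.sum_congr rfl (fun i _ => ?_)
      rw [Matrix.mulVec, dotProduct, Finset.mul_sum]
      refine Finset.sum_congr rfl (fun j _ => ?_)
      rw [Matrix.sub_apply]
    rw [show (fun t : ℝ => ∑ i, (starRingEnd ℂ) (f t i) * ((U (t / δ) t - U0 t).mulVec (g t) i))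
        = fun t : ℝ => ∑ i : Fin 2, ∑ j : Fin 2, φ i t * ((U (t/δ) t i j - U0 t i j) * ψ j t)
      from funext e1]
    rw [integral_finset_sum _ (fun i _ => integrable_finset_sum _ (fun j _ => hInt i j))]
    exact Finset.sum_congr rfl (fun i _ => integral_finset_sum _ (fun j _ => hInt i j))
  rw [hexp]
  have hterm : ∀ i j : Fin 2,
      ‖∫ t : ℝ, φ i t * ((U (t/δ) t i j - U0 t i j) * ψ j t)‖
        ≤ C i j * δ * (H1norm f * H1norm g) := by
    intro i j
    have h1 := hC i j δ hδ (φ i) (ψ j) (hφC1 i) (hφS i) (hψC1 j) (hψS j)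
    refine h1.trans ?_
    apply mul_le_mul_of_nonneg_left _ (mul_nonneg (hCpos i j).le hδ0.le)
    apply mul_le_mul (hφX i) (hψX j) (by positivity) hH1f
  calc ‖∑ i : Fin 2, ∑ j : Fin 2, ∫ t : ℝ, φ i t * ((U (t/δ) t i j - U0 t i j) * ψ j t)‖
      ≤ ∑ i : Fin 2, ∑ j : Fin 2, ‖∫ t : ℝ, φ i t * ((U (t/δ) t i j - U0 t i j) * ψ j t)‖ :=
        (norm_sum_le _ _).trans (Finset.sum_le_sum (fun i _ => norm_sum_le _ _))
    _ ≤ ∑ i : Fin 2, ∑ j : Fin 2, C i j * δ * (H1norm f * H1norm g) :=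
        Finset.sum_le_sum (fun i _ => Finset.sum_le_sum (fun j _ => hterm i j))
    _ = (∑ i : Fin 2, ∑ j : Fin 2, C i j) * δ * H1norm f * H1norm g := by
        simp only [Fin.sum_univ_two]; ring
end

section
/- Let W : ℝ² → ℝ be continuous, Λ-periodic (W(x+w) = W(x) for all x ∈ ℝ², w ∈ Λ) and odd (W(−x) = −W(x)). Let ξ ∈ ℝ² and let φ₁ : ℝ² → ℂ be continuous and ξ-quasiperiodic, and set φ₂(x) := conj(φ₁(−x)). Then ∫_𝕃 conj(φ₂(x))·W(x)·φ₁(x) dx = 0, ∫_𝕃 conj(φ₁(x))·W(x)·φ₂(x) dx = 0, and ∫_𝕃 W(x)·|φ₁(x)|² dx = −∫_𝕃 W(x)·|φ₂(x)|² dx. -/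
open MeasureTheory

/-- The Euclidean inner product on `ℝ²`. -/
def dot2 (x y : ℝ × ℝ) : ℝ := x.1 * y.1 + x.2 * y.2

/-- `f` is `ξ`-quasiperiodic with respect to the lattice `ℤv₁ + ℤv₂`. -/
def Quasiperiodic (v₁ v₂ ξ : ℝ × ℝ) (f : ℝ × ℝ → ℂ) : Prop :=
  ∀ (x : ℝ × ℝ) (m n : ℤ),
    f (x + ((m : ℝ) • v₁ + (n : ℝ) • v₂)) =
      Complex.exp (Complex.I * (dot2 ξ ((m : ℝ) • v₁ + (n : ℝ) • v₂) : ℂ)) * f x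

/-- The fundamental cell `𝕃 = {s₁v₁ + s₂v₂ : s₁, s₂ ∈ [0,1)}`. -/
def cell (v₁ v₂ : ℝ × ℝ) : Set (ℝ × ℝ) :=
  {x | ∃ s₁ s₂ : ℝ, s₁ ∈ Set.Ico (0 : ℝ) 1 ∧ s₂ ∈ Set.Ico (0 : ℝ) 1 ∧
    x = s₁ • v₁ + s₂ • v₂}

/-! The substitution `x ↦ -x` preserves the integral over the cell of any `Λ`-periodic function,
because `-𝕃` is another fundamental domain of `Λ`. The function `φ₁(-x) W(x) φ₁(x)` is periodic
(the quasiperiodic phases of `φ₁(-x)` and `φ₁(x)` cancel) and odd, so its integral vanishes; the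
second integrand is its conjugate. The third identity is the substitution applied to `W |φ₁|²`,
since `|φ₂(x)| = |φ₁(-x)|`. -/

theorem MeasureTheory.IsAddFundamentalDomain.setIntegral_comp_neg {α E : Type*} [AddCommGroup α]
    [MeasurableSpace α] [MeasurableNeg α] [NormedAddCommGroup E] [NormedSpace ℝ E]
    {G : AddSubgroup α} [Countable G] [MeasurableConstVAdd G α] {μ : Measure α}
    [μ.IsNegInvariant] [VAddInvariantMeasure G α μ] {s : Set α}
    (hs : IsAddFundamentalDomain G s μ) {f : α → E} (hf : ∀ (g : G) (x : α), f (g +ᵥ x) = f x) :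
    ∫ x in s, f (-x) ∂μ = ∫ x in s, f x ∂μ := by
  have hneg : IsAddFundamentalDomain G (Neg.neg '' s) μ :=
    hs.image_of_equiv (Equiv.neg α) (Measure.measurePreserving_neg μ).quasiMeasurePreserving
      (Equiv.neg G) fun g x => by
        change -(((-g : G) : α) + x) = (g : α) + -x
        rw [AddSubgroup.coe_neg]
        abel
  rw [← (Measure.measurePreserving_neg μ).setIntegral_image_emb measurableEmbedding_neg f s]
  exact hneg.setIntegral_eq hs hf

def LatticePeriodic {α : Type*} (v₁ v₂ : ℝ × ℝ) (f : ℝ × ℝ → α) : Prop :=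
  ∀ (x : ℝ × ℝ) (m n : ℤ), f (x + ((m : ℝ) • v₁ + (n : ℝ) • v₂)) = f x

section LatticePeriodic

variable {α β : Type*} {v₁ v₂ : ℝ × ℝ}

theorem LatticePeriodic.comp {f : ℝ × ℝ → α} (hf : LatticePeriodic v₁ v₂ f) (g : α → β) :
    LatticePeriodic v₁ v₂ (g ∘ f) := fun x m n => congrArg g (hf x m n)

theorem LatticePeriodic.mul [Mul α] {f g : ℝ × ℝ → α} (hf : LatticePeriodic v₁ v₂ f)
    (hg : LatticePeriodic v₁ v₂ g) : LatticePeriodic v₁ v₂ (f * g) := fun x m n => by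
  simp only [Pi.mul_apply, hf x m n, hg x m n]

theorem LatticePeriodic.add_mem_span {f : ℝ × ℝ → α} (hf : LatticePeriodic v₁ v₂ f)
    {w : ℝ × ℝ} (hw : w ∈ Submodule.span ℤ {v₁, v₂}) (x : ℝ × ℝ) : f (w + x) = f x := by
  obtain ⟨m, n, rfl⟩ := Submodule.mem_span_pair.mp hw
  simpa only [add_comm _ x, Int.cast_smul_eq_zsmul] using hf x m n

end LatticePeriodic

section Cell

variable {v₁ v₂ : ℝ × ℝ}

theorem cell_eq_fundamentalDomain {b : Module.Basis (Fin 2) ℝ (ℝ × ℝ)} (hb : ⇑b = ![v₁, v₂]) :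
    cell v₁ v₂ = ZSpan.fundamentalDomain b := by
  ext x
  constructor
  · rintro ⟨s₁, s₂, h₁, h₂, rfl⟩ i
    have hx : s₁ • v₁ + s₂ • v₂ = s₁ • b 0 + s₂ • b 1 := by simp [hb]
    fin_cases i <;> simp [hx, h₁.1, h₁.2, h₂.1, h₂.2]
  · intro hx
    refine ⟨b.repr x 0, b.repr x 1, hx 0, hx 1, ?_⟩
    conv_lhs => rw [← b.sum_repr x, Fin.sum_univ_two]
    simp [hb]

theorem integral_cell_comp_neg {E : Type*} [NormedAddCommGroup E] [NormedSpace ℝ E]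
    (hindep : LinearIndependent ℝ ![v₁, v₂]) {f : ℝ × ℝ → E} (hf : LatticePeriodic v₁ v₂ f) :
    ∫ x in cell v₁ v₂, f (-x) = ∫ x in cell v₁ v₂, f x := by
  have hcard : Fintype.card (Fin 2) = Module.finrank ℝ (ℝ × ℝ) := by simp
  let b := basisOfLinearIndependentOfCardEqFinrank hindep hcard
  have hb : ⇑b = ![v₁, v₂] := coe_basisOfLinearIndependentOfCardEqFinrank hindep hcard
  have hspan : Set.range ⇑b = {v₁, v₂} := by
    rw [hb, Matrix.range_cons, Matrix.range_cons, Matrix.range_empty, Set.union_empty,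
      Set.singleton_union]
  have : Countable (Submodule.span ℤ (Set.range ⇑b)).toAddSubgroup :=
    inferInstanceAs (Countable (Submodule.span ℤ (Set.range ⇑b)))
  rw [cell_eq_fundamentalDomain hb]
  exact (ZSpan.isAddFundamentalDomain' b volume).setIntegral_comp_neg fun g x =>
    hf.add_mem_span (hspan ▸ g.2) x

theorem integral_cell_eq_zero_of_odd {E : Type*} [NormedAddCommGroup E] [NormedSpace ℝ E]
    (hindep : LinearIndependent ℝ ![v₁, v₂]) {f : ℝ × ℝ → E} (hf : LatticePeriodic v₁ v₂ f)
    (hodd : ∀ x, f (-x) = -f x) : ∫ x in cell v₁ v₂, f x = 0 := by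
  have : IsAddTorsionFree E := .of_isTorsionFree ℝ E
  rw [← self_eq_neg, ← integral_neg, ← integral_cell_comp_neg hindep hf]
  simp_rw [hodd]

end Cell

section Quasiperiodic

variable {v₁ v₂ ξ : ℝ × ℝ} {φ : ℝ × ℝ → ℂ}

theorem Quasiperiodic.latticePeriodic_comp_neg_mul (hφ : Quasiperiodic v₁ v₂ ξ φ) :
    LatticePeriodic v₁ v₂ fun x => φ (-x) * φ x := fun x m n => by
  dsimp only
  set w := (m : ℝ) • v₁ + (n : ℝ) • v₂
  have hneg : -(x + w) = -x + (((-m : ℤ) : ℝ) • v₁ + ((-n : ℤ) : ℝ) • v₂) := by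
    push_cast
    simp only [w, neg_smul]
    abel
  have hdot : dot2 ξ (((-m : ℤ) : ℝ) • v₁ + ((-n : ℤ) : ℝ) • v₂) = -dot2 ξ w := by
    simp only [w, dot2, Prod.fst_add, Prod.snd_add, Prod.smul_fst, Prod.smul_snd, smul_eq_mul]
    push_cast
    ring
  rw [hneg, hφ, hφ, hdot, mul_mul_mul_comm, ← Complex.exp_add, Complex.ofReal_neg, mul_neg,
    neg_add_cancel, Complex.exp_zero, one_mul]

theorem Quasiperiodic.latticePeriodic_normSq (hφ : Quasiperiodic v₁ v₂ ξ φ) :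
    LatticePeriodic v₁ v₂ fun x => Complex.normSq (φ x) := fun x m n => by
  dsimp only
  rw [hφ, Complex.normSq_mul, Complex.normSq_eq_norm_sq, Complex.norm_exp_I_mul_ofReal,
    one_pow, one_mul]

end Quasiperiodic

theorem stmt5_general (v₁ v₂ : ℝ × ℝ) (hindep : LinearIndependent ℝ ![v₁, v₂])
    (W : ℝ × ℝ → ℝ)
    (hWper : ∀ (x : ℝ × ℝ) (m n : ℤ), W (x + ((m : ℝ) • v₁ + (n : ℝ) • v₂)) = W x)
    (hWodd : ∀ x, W (-x) = -W x)
    (ξ : ℝ × ℝ) (φ₁ : ℝ × ℝ → ℂ)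
    (hφ₁qp : Quasiperiodic v₁ v₂ ξ φ₁)
    (φ₂ : ℝ × ℝ → ℂ) (hφ₂ : ∀ x, φ₂ x = (starRingEnd ℂ) (φ₁ (-x))) :
    (∫ x in cell v₁ v₂, (starRingEnd ℂ) (φ₂ x) * (W x : ℂ) * φ₁ x) = 0 ∧
    (∫ x in cell v₁ v₂, (starRingEnd ℂ) (φ₁ x) * (W x : ℂ) * φ₂ x) = 0 ∧
    (∫ x in cell v₁ v₂, W x * Complex.normSq (φ₁ x)) =
      -∫ x in cell v₁ v₂, W x * Complex.normSq (φ₂ x) := by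
  have hW : LatticePeriodic v₁ v₂ W := hWper
  let F : ℝ × ℝ → ℂ := (fun x => φ₁ (-x) * φ₁ x) * (Complex.ofReal ∘ W)
  have hF : ∫ x in cell v₁ v₂, F x = 0 :=
    integral_cell_eq_zero_of_odd hindep (hφ₁qp.latticePeriodic_comp_neg_mul.mul (hW.comp _))
      fun x => by simp only [F, Pi.mul_apply, Function.comp_apply, neg_neg, hWodd]; push_cast; ring
  have hF₁ : ∀ x, (starRingEnd ℂ) (φ₂ x) * (W x : ℂ) * φ₁ x = F x := fun x => by
    simp only [F, hφ₂, Complex.conj_conj, Pi.mul_apply, Function.comp_apply]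
    ring
  have hF₂ : ∀ x, (starRingEnd ℂ) (φ₁ x) * (W x : ℂ) * φ₂ x = (starRingEnd ℂ) (F x) := fun x => by
    simp only [F, hφ₂, map_mul, Complex.conj_ofReal, Pi.mul_apply, Function.comp_apply]
    ring
  refine ⟨?_, ?_, ?_⟩
  · simp_rw [hF₁, hF]
  · simp_rw [hF₂, integral_conj, hF, map_zero]
  · have hH : LatticePeriodic v₁ v₂ fun x => W x * Complex.normSq (φ₁ x) :=
      hW.mul hφ₁qp.latticePeriodic_normSq
    rw [← integral_cell_comp_neg hindep hH, ← integral_neg]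
    simp only [hWodd, hφ₂, Complex.normSq_conj, neg_mul]

/-- Lemma 1h of the paper: for an odd periodic `W` and `φ₂(x) = conj(φ₁(−x))`, the
off-diagonal matrix elements of `W` vanish and the diagonal ones are opposite. -/
theorem stmt5 (v₁ v₂ : ℝ × ℝ) (hindep : LinearIndependent ℝ ![v₁, v₂])
    (W : ℝ × ℝ → ℝ) (hWcont : Continuous W)
    (hWper : ∀ (x : ℝ × ℝ) (m n : ℤ), W (x + ((m : ℝ) • v₁ + (n : ℝ) • v₂)) = W x)
    (hWodd : ∀ x, W (-x) = -W x)
    (ξ : ℝ × ℝ) (φ₁ : ℝ × ℝ → ℂ) (hφ₁cont : Continuous φ₁)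
    (hφ₁qp : Quasiperiodic v₁ v₂ ξ φ₁)
    (φ₂ : ℝ × ℝ → ℂ) (hφ₂ : ∀ x, φ₂ x = (starRingEnd ℂ) (φ₁ (-x))) :
    (∫ x in cell v₁ v₂, (starRingEnd ℂ) (φ₂ x) * (W x : ℂ) * φ₁ x) = 0 ∧
    (∫ x in cell v₁ v₂, (starRingEnd ℂ) (φ₁ x) * (W x : ℂ) * φ₂ x) = 0 ∧
    (∫ x in cell v₁ v₂, W x * Complex.normSq (φ₁ x)) =
      -∫ x in cell v₁ v₂, W x * Complex.normSq (φ₂ x) :=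
  stmt5_general v₁ v₂ hindep W hWper hWodd ξ φ₁ hφ₁qp φ₂ hφ₂
end

section
/- Let W : ℝ² → ℝ be continuous, Λ-periodic and odd (W(−x) = −W(x)). Let φ : ℝ² → ℂ be continuous, ξ⋆^A-quasiperiodic, and satisfy φ(Rx) = τ·φ(x) for all x ∈ ℝ². Define ψ(x) := φ(−x). Then: (i) ψ is ξ⋆^B-quasiperiodic; (ii) ψ(Rx) = τ·ψ(x) for all x ∈ ℝ²; (iii) ∫_𝕃 W(x)·|ψ(x)|² dx = −∫_𝕃 W(x)·|φ(x)|² dx. (Hence the coefficients ϑ⋆^A := ∫_𝕃 W|φ|² and ϑ⋆^B := ∫_𝕃 W|ψ|² attached to the two Dirac momenta satisfy ϑ⋆^A + ϑ⋆^B = 0.) -/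
open MeasureTheory

/-- Generator `v₁ = a(√3, 1)` of the equilateral lattice. -/
noncomputable def hex1 (a : ℝ) : ℝ × ℝ := (Real.sqrt 3 * a, a)

/-- Generator `v₂ = a(√3, −1)` of the equilateral lattice. -/
noncomputable def hex2 (a : ℝ) : ℝ × ℝ := (Real.sqrt 3 * a, -a)

/-- The rotation `R` by `2π/3`. -/
noncomputable def Rot (x : ℝ × ℝ) : ℝ × ℝ :=
  ((-x.1 + Real.sqrt 3 * x.2) / 2, (-(Real.sqrt 3) * x.1 - x.2) / 2)

/-- `τ = e^{2πi/3}`. -/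
noncomputable def tau3 : ℂ := Complex.exp (2 * Real.pi * Complex.I / 3)

/-!
Spatial inversion `x ↦ -x` sends a `ξ`-quasiperiodic function to a `(-ξ)`-quasiperiodic one,
and `-ξ⋆^A ≡ ξ⋆^B` modulo the dual lattice `2π(ℤk₁ + ℤk₂)`, since `ξ⋆^A + ξ⋆^B = 2π(k₁ + k₂)`.
Inversion commutes with the rotation `R`. For the integral, `W |φ|²` is `Λ`-periodic and `W` is
odd, so `W |ψ|²` is minus the reflection of `W |φ|²`; the reflection `x ↦ (v₁ + v₂) - x` maps the
cell onto itself up to a null set of edges, and periodicity absorbs the shift by `v₁ + v₂`.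
-/

open Set

lemma dot2_add_left (x y z : ℝ × ℝ) : dot2 (x + y) z = dot2 x z + dot2 y z := by
  simp only [dot2, Prod.fst_add, Prod.snd_add]; ring

lemma dot2_neg_right (x y : ℝ × ℝ) : dot2 x (-y) = dot2 (-x) y := by
  simp only [dot2, Prod.fst_neg, Prod.snd_neg]; ring

lemma dot2_dualBasis {v₁ v₂ k₁ k₂ : ℝ × ℝ}
    (hk11 : dot2 k₁ v₁ = 1) (hk12 : dot2 k₁ v₂ = 0)
    (hk21 : dot2 k₂ v₁ = 0) (hk22 : dot2 k₂ v₂ = 1) (p q m n : ℝ) :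
    dot2 (p • k₁ + q • k₂) (m • v₁ + n • v₂) = p * m + q * n := by
  simp only [dot2, Prod.fst_add, Prod.snd_add, Prod.smul_fst, Prod.smul_snd, smul_eq_mul]
    at hk11 hk12 hk21 hk22 ⊢
  linear_combination (p * m) * hk11 + (p * n) * hk12 + (q * m) * hk21 + (q * n) * hk22

lemma Rot_neg (x : ℝ × ℝ) : Rot (-x) = -Rot x := by
  simp only [Rot, Prod.fst_neg, Prod.snd_neg, Prod.neg_mk]
  congr 1 <;> ring

namespace Quasiperiodic

variable {v₁ v₂ ξ : ℝ × ℝ} {f : ℝ × ℝ → ℂ}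

lemma comp_neg (hf : Quasiperiodic v₁ v₂ ξ f) : Quasiperiodic v₁ v₂ (-ξ) (fun x => f (-x)) := by
  intro x m n
  have hlat : -(x + ((m : ℝ) • v₁ + (n : ℝ) • v₂)) =
      -x + (((-m : ℤ) : ℝ) • v₁ + ((-n : ℤ) : ℝ) • v₂) := by
    push_cast; module
  have hneg : ((-m : ℤ) : ℝ) • v₁ + ((-n : ℤ) : ℝ) • v₂ = -((m : ℝ) • v₁ + (n : ℝ) • v₂) := by
    push_cast; module
  dsimp only
  rw [hlat, hf (-x) (-m) (-n), hneg, dot2_neg_right]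

lemma add_of_dot2_mem_two_pi_int (hf : Quasiperiodic v₁ v₂ ξ f) {η : ℝ × ℝ}
    (hη : ∀ m n : ℤ, ∃ k : ℤ, dot2 η ((m : ℝ) • v₁ + (n : ℝ) • v₂) = 2 * Real.pi * k) :
    Quasiperiodic v₁ v₂ (ξ + η) f := by
  intro x m n
  obtain ⟨k, hk⟩ := hη m n
  rw [hf x m n, dot2_add_left, hk]
  congr 1
  rw [Complex.ofReal_add, mul_add, Complex.exp_add]
  push_cast
  rw [show Complex.I * (2 * Real.pi * k) = k * (2 * Real.pi * Complex.I) by ring,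
    Complex.exp_int_mul_two_pi_mul_I, mul_one]

lemma normSq_add (hf : Quasiperiodic v₁ v₂ ξ f) (x : ℝ × ℝ) (m n : ℤ) :
    Complex.normSq (f (x + ((m : ℝ) • v₁ + (n : ℝ) • v₂))) = Complex.normSq (f x) := by
  rw [hf x m n, Complex.normSq_mul, Complex.normSq_eq_norm_sq, Complex.norm_exp_I_mul_ofReal,
    one_pow, one_mul]

end Quasiperiodic

lemma image_ae_eq_of_ae_eq {E : Type*} [NormedAddCommGroup E] [NormedSpace ℝ E]
    [MeasurableSpace E] [BorelSpace E] [FiniteDimensional ℝ E]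
    (μ : Measure E) [μ.IsAddHaarMeasure] (L : E →ₗ[ℝ] E) {s t : Set E} (h : s =ᵐ[μ] t) :
    L '' s =ᵐ[μ] L '' t := by
  have image_ae_le : ∀ {s t : Set E}, s ≤ᵐ[μ] t → L '' s ≤ᵐ[μ] L '' t := fun hst =>
    ae_le_set.2 <| measure_mono_null
      (sdiff_subset_iff.2 <| by
        rw [← image_union, union_sdiff_self]; exact image_mono subset_union_right)
      (by rw [Measure.addHaar_image_linearMap, ae_le_set.1 hst, mul_zero])
  exact (image_ae_le h.le).antisymm (image_ae_le h.symm.le)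

noncomputable def latticeCoord (v₁ v₂ : ℝ × ℝ) : (ℝ × ℝ) →ₗ[ℝ] ℝ × ℝ :=
  (LinearMap.fst ℝ ℝ ℝ).smulRight v₁ + (LinearMap.snd ℝ ℝ ℝ).smulRight v₂

lemma latticeCoord_image_prod (v₁ v₂ : ℝ × ℝ) (I J : Set ℝ) :
    latticeCoord v₁ v₂ '' (I ×ˢ J) = {x | ∃ s₁ s₂ : ℝ, s₁ ∈ I ∧ s₂ ∈ J ∧ x = s₁ • v₁ + s₂ • v₂} := by
  ext x
  simp only [mem_image, mem_prod, mem_ofPred_eq, Prod.exists, latticeCoord, LinearMap.add_apply,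
    LinearMap.smulRight_apply, LinearMap.fst_apply, LinearMap.snd_apply]
  exact ⟨fun ⟨s₁, s₂, ⟨h₁, h₂⟩, hx⟩ => ⟨s₁, s₂, h₁, h₂, hx.symm⟩,
    fun ⟨s₁, s₂, h₁, h₂, hx⟩ => ⟨s₁, s₂, ⟨h₁, h₂⟩, hx.symm⟩⟩

lemma cell_eq_latticeCoord_image (v₁ v₂ : ℝ × ℝ) :
    cell v₁ v₂ = latticeCoord v₁ v₂ '' (Ico 0 1 ×ˢ Ico 0 1) :=
  (latticeCoord_image_prod v₁ v₂ _ _).symm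

lemma preimage_sub_latticeCoord_image_Ioc_prod (v₁ v₂ : ℝ × ℝ) :
    (fun x => (v₁ + v₂) - x) ⁻¹' latticeCoord v₁ v₂ '' (Ioc 0 1 ×ˢ Ioc 0 1) = cell v₁ v₂ := by
  ext x
  simp only [mem_preimage, latticeCoord_image_prod, cell, mem_ofPred_eq, mem_Ico, mem_Ioc]
  constructor
  · rintro ⟨t₁, t₂, ht₁, ht₂, hx⟩
    refine ⟨1 - t₁, 1 - t₂, ⟨by linarith, by linarith⟩, ⟨by linarith, by linarith⟩, ?_⟩
    rw [show x = (v₁ + v₂) - (t₁ • v₁ + t₂ • v₂) by rw [← hx]; abel]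
    module
  · rintro ⟨s₁, s₂, hs₁, hs₂, rfl⟩
    exact ⟨1 - s₁, 1 - s₂, ⟨by linarith, by linarith⟩, ⟨by linarith, by linarith⟩, by module⟩

lemma setIntegral_cell_comp_neg {E : Type*} [NormedAddCommGroup E] [NormedSpace ℝ E]
    (v₁ v₂ : ℝ × ℝ) (F : ℝ × ℝ → E) (hF : ∀ x, F (x + (v₁ + v₂)) = F x) :
    ∫ x in cell v₁ v₂, F (-x) = ∫ x in cell v₁ v₂, F x := by
  have hae : latticeCoord v₁ v₂ '' (Ioc 0 1 ×ˢ Ioc 0 1) =ᵐ[volume] cell v₁ v₂ := by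
    rw [cell_eq_latticeCoord_image]
    refine image_ae_eq_of_ae_eq volume _ ?_
    rw [Measure.volume_eq_prod]
    exact Measure.set_prod_ae_eq Ico_ae_eq_Ioc.symm Ico_ae_eq_Ioc.symm
  calc ∫ x in cell v₁ v₂, F (-x)
      = ∫ x in (fun x => (v₁ + v₂) - x) ⁻¹' latticeCoord v₁ v₂ '' (Ioc 0 1 ×ˢ Ioc 0 1),
          F ((v₁ + v₂) - x) := by
        rw [preimage_sub_latticeCoord_image_Ioc_prod]
        simp only [sub_eq_neg_add, hF]
    _ = ∫ x in latticeCoord v₁ v₂ '' (Ioc 0 1 ×ˢ Ioc 0 1), F x :=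
        (Measure.measurePreserving_sub_left volume (v₁ + v₂)).setIntegral_preimage_emb
          (MeasurableEquiv.subLeft (v₁ + v₂)).measurableEmbedding F _
    _ = ∫ x in cell v₁ v₂, F x := setIntegral_congr_set hae

theorem stmt6_general (a : ℝ)
    (k₁ k₂ : ℝ × ℝ)
    (hk11 : dot2 k₁ (hex1 a) = 1) (hk12 : dot2 k₁ (hex2 a) = 0)
    (hk21 : dot2 k₂ (hex1 a) = 0) (hk22 : dot2 k₂ (hex2 a) = 1)
    (W : ℝ × ℝ → ℝ)
    (hWper : ∀ (x : ℝ × ℝ) (m n : ℤ),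
      W (x + ((m : ℝ) • hex1 a + (n : ℝ) • hex2 a)) = W x)
    (hWodd : ∀ x, W (-x) = -W x)
    (φ : ℝ × ℝ → ℂ)
    (hφqp : Quasiperiodic (hex1 a) (hex2 a)
      ((2 * Real.pi / 3) • ((2 : ℝ) • k₁ + k₂)) φ)
    (hφrot : ∀ x, φ (Rot x) = tau3 * φ x)
    (ψ : ℝ × ℝ → ℂ) (hψ : ∀ x, ψ x = φ (-x)) :
    Quasiperiodic (hex1 a) (hex2 a) ((2 * Real.pi / 3) • (k₁ + (2 : ℝ) • k₂)) ψ ∧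
    (∀ x, ψ (Rot x) = tau3 * ψ x) ∧
    (∫ x in cell (hex1 a) (hex2 a), W x * Complex.normSq (ψ x)) =
      -∫ x in cell (hex1 a) (hex2 a), W x * Complex.normSq (φ x) := by
  refine ⟨?_, fun x => by rw [hψ, hψ, ← Rot_neg, hφrot], ?_⟩
  · have hξ : (2 * Real.pi / 3) • (k₁ + (2 : ℝ) • k₂) =
        -((2 * Real.pi / 3) • ((2 : ℝ) • k₁ + k₂)) +
          ((2 * Real.pi) • k₁ + (2 * Real.pi) • k₂) := by module
    rw [show ψ = fun x => φ (-x) from funext hψ, hξ]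
    refine hφqp.comp_neg.add_of_dot2_mem_two_pi_int fun m n => ⟨m + n, ?_⟩
    rw [dot2_dualBasis hk11 hk12 hk21 hk22]
    push_cast; ring
  · have hper : ∀ x, W (x + (hex1 a + hex2 a)) * Complex.normSq (φ (x + (hex1 a + hex2 a))) =
        W x * Complex.normSq (φ x) := fun x => by
      simpa only [Int.cast_one, one_smul] using
        congrArg₂ (· * ·) (hWper x 1 1) (hφqp.normSq_add x 1 1)
    rw [← setIntegral_cell_comp_neg _ _ (fun x => W x * Complex.normSq (φ x)) hper,
      ← integral_neg]
    simp only [hψ, hWodd, neg_mul, neg_neg]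

/-- Lemma 1o of the paper: spatial inversion maps the Dirac data at `ξ⋆^A` to Dirac data
at `ξ⋆^B`, and flips the sign of the coefficient `ϑ⋆`, so that `ϑ⋆^A + ϑ⋆^B = 0`. -/
theorem stmt6 (a : ℝ) (ha : 0 < a) (hdet : 2 * Real.sqrt 3 * a ^ 2 = 1)
    (k₁ k₂ : ℝ × ℝ)
    (hk11 : dot2 k₁ (hex1 a) = 1) (hk12 : dot2 k₁ (hex2 a) = 0)
    (hk21 : dot2 k₂ (hex1 a) = 0) (hk22 : dot2 k₂ (hex2 a) = 1)
    (W : ℝ × ℝ → ℝ) (hWcont : Continuous W)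
    (hWper : ∀ (x : ℝ × ℝ) (m n : ℤ),
      W (x + ((m : ℝ) • hex1 a + (n : ℝ) • hex2 a)) = W x)
    (hWodd : ∀ x, W (-x) = -W x)
    (φ : ℝ × ℝ → ℂ) (hφcont : Continuous φ)
    (hφqp : Quasiperiodic (hex1 a) (hex2 a)
      ((2 * Real.pi / 3) • ((2 : ℝ) • k₁ + k₂)) φ)
    (hφrot : ∀ x, φ (Rot x) = tau3 * φ x)
    (ψ : ℝ × ℝ → ℂ) (hψ : ∀ x, ψ x = φ (-x)) :
    Quasiperiodic (hex1 a) (hex2 a) ((2 * Real.pi / 3) • (k₁ + (2 : ℝ) • k₂)) ψ ∧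
    (∀ x, ψ (Rot x) = tau3 * ψ x) ∧
    (∫ x in cell (hex1 a) (hex2 a), W x * Complex.normSq (ψ x)) =
      -∫ x in cell (hex1 a) (hex2 a), W x * Complex.normSq (φ x) :=
  stmt6_general a k₁ k₂ hk11 hk12 hk21 hk22 W hWper hWodd φ hφqp hφrot ψ hψ
end

section
/- Let κ : ℝ → ℝ be any function, let ϑ ∈ ℂ, and let u : ℝ → ℂ² be differentiable with ν_F|k'|·m₁(−i u'(t)) + ϑ⋆κ(t)·m₃ u(t) = ϑ·u(t) for all t ∈ ℝ. Then the function v := m₂u is differentiable and satisfies ν_F|k'|·m₁(−i v'(t)) + ϑ⋆κ(t)·m₃ v(t) = −ϑ·v(t) for all t ∈ ℝ. (Conjugation by m₂ flips the sign of eigenvalues of the Dirac operator D⋆.) -/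
open Matrix

/-- The matrix `m₁ = (ν_F|k'|)⁻¹ [[0, ν⋆k'], [conj(ν⋆k'), 0]]`. -/
noncomputable def m1 (ν k' : ℂ) : Matrix (Fin 2) (Fin 2) ℂ :=
  (‖ν‖ * ‖k'‖)⁻¹ • !![0, ν * k'; (starRingEnd ℂ) (ν * k'), 0]

/-- The matrix `m₂ = (ν_F|ℓ|)⁻¹ [[0, ν⋆ℓ], [conj(ν⋆ℓ), 0]]`. -/
noncomputable def m2 (ν ℓ : ℂ) : Matrix (Fin 2) (Fin 2) ℂ :=
  (‖ν‖ * ‖ℓ‖)⁻¹ • !![0, ν * ℓ; (starRingEnd ℂ) (ν * ℓ), 0]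

/-- The matrix `m₃ = [[1, 0], [0, −1]]`. -/
def m3 : Matrix (Fin 2) (Fin 2) ℂ := !![1, 0; 0, -1]

/-! `m₂` anticommutes with `m₃` (it is off-diagonal) and with `m₁` (the Clifford relation for
off-diagonal Hermitian matrices, since `Re (ν⋆k' · conj (ν⋆ℓ)) = ν_F² Re (k' · conj ℓ) = 0`),
and, being constant, it commutes with `d/dt`. Applying `m₂` to the eigenvalue equation therefore
moves it past the operator at the cost of a sign. -/

theorem HasDerivAt.matrix_mulVec {𝕜 R : Type*} [NontriviallyNormedField 𝕜] [NormedCommRing R]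
    [NormedAlgebra 𝕜 R] {m n : Type*} [Fintype n] (M : Matrix m n R) {u : 𝕜 → n → R}
    {u' : n → R} {t : 𝕜} (h : HasDerivAt u u' t) :
    HasDerivAt (fun s => M *ᵥ u s) (M *ᵥ u') t := by
  refine hasDerivAt_pi.2 fun i => ?_
  simp only [mulVec, dotProduct]
  exact HasDerivAt.fun_sum fun j _ => (hasDerivAt_pi.1 h j).const_mul (M i j)

theorem Matrix.mulVec_mulVec_of_anticomm {R n : Type*} [CommRing R] [Fintype n]
    {A P : Matrix n n R} (h : A * P = -(P * A)) (v : n → R) :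
    A *ᵥ P *ᵥ v = -(P *ᵥ A *ᵥ v) := by
  rw [mulVec_mulVec, mulVec_mulVec, h, neg_mulVec]

theorem offDiag_mul_offDiag_anticomm (a b : ℂ) (h : (a * (starRingEnd ℂ) b).re = 0) :
    !![0, a; (starRingEnd ℂ) a, 0] * !![0, b; (starRingEnd ℂ) b, 0] =
      -(!![0, b; (starRingEnd ℂ) b, 0] * !![0, a; (starRingEnd ℂ) a, 0]) := by
  have hsum : a * (starRingEnd ℂ) b + (starRingEnd ℂ) a * b = 0 := by
    simpa [h] using Complex.add_conj (a * (starRingEnd ℂ) b)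
  ext i j
  fin_cases i <;> fin_cases j <;> simp <;> linear_combination hsum

theorem m3_mul_offDiag_anticomm (a b : ℂ) :
    m3 * !![0, a; b, 0] = -(!![0, a; b, 0] * m3) := by
  ext i j
  fin_cases i <;> fin_cases j <;> simp [m3]

theorem m1_mul_m2_anticomm (ν k' ℓ : ℂ) (horth : (k' * (starRingEnd ℂ) ℓ).re = 0) :
    m1 ν k' * m2 ν ℓ = -(m2 ν ℓ * m1 ν k') := by
  have h : (ν * k' * (starRingEnd ℂ) (ν * ℓ)).re = 0 := by
    rw [map_mul, show ν * k' * ((starRingEnd ℂ) ν * (starRingEnd ℂ) ℓ)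
      = (Complex.normSq ν : ℂ) * (k' * (starRingEnd ℂ) ℓ) by
        rw [Complex.normSq_eq_conj_mul_self]; ring, Complex.re_ofReal_mul, horth, mul_zero]
  rw [m1, m2, smul_mul_smul_comm, smul_mul_smul_comm, offDiag_mul_offDiag_anticomm _ _ h,
    smul_neg, mul_comm]

theorem m3_mul_m2_anticomm (ν ℓ : ℂ) : m3 * m2 ν ℓ = -(m2 ν ℓ * m3) := by
  rw [m2, mul_smul_comm, smul_mul_assoc, m3_mul_offDiag_anticomm, smul_neg]

theorem mulVec_eigenfunction_neg_of_anticomm {n : Type*} [Fintype n] {A B P : Matrix n n ℂ}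
    (hA : A * P = -(P * A)) (hB : B * P = -(P * B)) (c : ℝ) (f : ℝ → ℝ) (ϑ : ℂ)
    {u : ℝ → n → ℂ} (hu : Differentiable ℝ u)
    (heq : ∀ t, c • A *ᵥ ((-Complex.I) • deriv u t) + f t • B *ᵥ u t = ϑ • u t) :
    Differentiable ℝ (fun t => P *ᵥ u t) ∧
      ∀ t, c • A *ᵥ ((-Complex.I) • deriv (fun s => P *ᵥ u s) t) + f t • B *ᵥ P *ᵥ u t =
        (-ϑ) • P *ᵥ u t := by
  have hder (t : ℝ) := (hu t).hasDerivAt.matrix_mulVec P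
  refine ⟨fun t => (hder t).differentiableAt, fun t => ?_⟩
  rw [(hder t).deriv, ← mulVec_smul P (-Complex.I), mulVec_mulVec_of_anticomm hA,
    mulVec_mulVec_of_anticomm hB, neg_smul ϑ, ← mulVec_smul P ϑ, ← heq t, mulVec_add,
    mulVec_smul P c, mulVec_smul P (f t), smul_neg, smul_neg, neg_add]

theorem stmt12_general (ϑstar : ℝ) (ν k' ℓ : ℂ)
    (horth : (k' * (starRingEnd ℂ) ℓ).re = 0)
    (κ : ℝ → ℝ) (ϑ : ℂ) (u : ℝ → Fin 2 → ℂ) (hu : Differentiable ℝ u)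
    (heq : ∀ t : ℝ,
      (‖ν‖ * ‖k'‖) • (m1 ν k').mulVec ((-Complex.I) • deriv u t) +
        (ϑstar * κ t) • m3.mulVec (u t) = ϑ • u t) :
    Differentiable ℝ (fun t => (m2 ν ℓ).mulVec (u t)) ∧
    ∀ t : ℝ,
      (‖ν‖ * ‖k'‖) • (m1 ν k').mulVec
          ((-Complex.I) • deriv (fun s => (m2 ν ℓ).mulVec (u s)) t) +
        (ϑstar * κ t) • m3.mulVec ((m2 ν ℓ).mulVec (u t)) =
      (-ϑ) • (m2 ν ℓ).mulVec (u t) :=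
  mulVec_eigenfunction_neg_of_anticomm (m1_mul_m2_anticomm ν k' ℓ horth)
    (m3_mul_m2_anticomm ν ℓ) _ (fun t => ϑstar * κ t) ϑ hu heq

/-- Conjugating by `m₂` flips the sign of the eigenvalues of
`D⋆ = ν_F|k'| m₁ D_t + ϑ⋆κ m₃`. -/
theorem stmt12 (ϑstar : ℝ) (hϑstar : ϑstar ≠ 0) (ν k' ℓ : ℂ)
    (hν : ν ≠ 0) (hk : k' ≠ 0) (hℓ : ℓ ≠ 0)
    (horth : (k' * (starRingEnd ℂ) ℓ).re = 0)
    (κ : ℝ → ℝ) (ϑ : ℂ) (u : ℝ → Fin 2 → ℂ) (hu : Differentiable ℝ u)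
    (heq : ∀ t : ℝ,
      (‖ν‖ * ‖k'‖) • (m1 ν k').mulVec ((-Complex.I) • deriv u t) +
        (ϑstar * κ t) • m3.mulVec (u t) = ϑ • u t) :
    Differentiable ℝ (fun t => (m2 ν ℓ).mulVec (u t)) ∧
    ∀ t : ℝ,
      (‖ν‖ * ‖k'‖) • (m1 ν k').mulVec
          ((-Complex.I) • deriv (fun s => (m2 ν ℓ).mulVec (u s)) t) +
        (ϑstar * κ t) • m3.mulVec ((m2 ν ℓ).mulVec (u t)) =
      (-ϑ) • (m2 ν ℓ).mulVec (u t) :=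
  stmt12_general ϑstar ν k' ℓ horth κ ϑ u hu heq
end

section
/- Let ϑ ∈ ℝ ∖ {0}, μ ∈ ℝ, and let f : ℝ → ℂ² be differentiable, square-integrable, not identically zero, and satisfy (D⋆f)(t) = ϑ·f(t) for all t ∈ ℝ. Then f and m₂f are linearly independent, and for each sign s ∈ {+1, −1} there exist a₊, a₋ ∈ ℂ, not both zero, such that w := a₊·f + a₋·m₂f is not identically zero, square-integrable, and satisfies (D(μ)w)(t) = s·√(ϑ² + μ²ν_F²|ℓ|²)·w(t) for all t ∈ ℝ. (Every nonzero L² eigenvalue ϑ of D⋆ produces the pair of L² eigenvalues ±√(ϑ² + μ²ν_F²|ℓ|²) of D(μ).) -/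
open Matrix MeasureTheory

/-- The Dirac operator `D(μ) = ν_F|k'| m₁ D_t + μν_F|ℓ| m₂ + ϑ⋆κ m₃`, acting pointwise on
differentiable functions `u : ℝ → ℂ²`; `D⋆ = D(0)`. -/
noncomputable def Dop (ϑstar : ℝ) (ν k' ℓ : ℂ) (κ : ℝ → ℝ) (μ : ℝ)
    (u : ℝ → Fin 2 → ℂ) (t : ℝ) : Fin 2 → ℂ :=
  (‖ν‖ * ‖k'‖) • (m1 ν k').mulVec ((-Complex.I) • deriv u t) +
    (μ * ‖ν‖ * ‖ℓ‖) • (m2 ν ℓ).mulVec (u t) +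
    (ϑstar * κ t) • m3.mulVec (u t)

namespace Stmt14Aux

/-- `mulVec` by a fixed matrix as a continuous `ℝ`-linear map. -/
noncomputable def mvL (M : Matrix (Fin 2) (Fin 2) ℂ) : (Fin 2 → ℂ) →L[ℝ] (Fin 2 → ℂ) :=
  LinearMap.toContinuousLinearMap ((Matrix.mulVecLin M).restrictScalars ℝ)

@[simp] lemma mvL_apply (M : Matrix (Fin 2) (Fin 2) ℂ) (v : Fin 2 → ℂ) :
    mvL M v = M.mulVec v := rfl

lemma hasDerivAt_mulVec {M : Matrix (Fin 2) (Fin 2) ℂ} {f : ℝ → Fin 2 → ℂ}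
    {f' : Fin 2 → ℂ} {t : ℝ} (hf : HasDerivAt f f' t) :
    HasDerivAt (fun s => M.mulVec (f s)) (M.mulVec f') t := by
  simpa [Function.comp_def] using (mvL M).hasFDerivAt.comp_hasDerivAt t hf

lemma m2_sq {ν ℓ : ℂ} (hν : ν ≠ 0) (hℓ : ℓ ≠ 0) : m2 ν ℓ * m2 ν ℓ = 1 := by
  have haν : ν * (starRingEnd ℂ) ν = ((‖ν‖ : ℝ) : ℂ) ^ 2 := by
    rw [Complex.mul_conj]; norm_cast; exact (Complex.sq_norm ν).symm
  have haℓ : ℓ * (starRingEnd ℂ) ℓ = ((‖ℓ‖ : ℝ) : ℂ) ^ 2 := by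
    rw [Complex.mul_conj]; norm_cast; exact (Complex.sq_norm ℓ).symm
  have hν' : ((‖ν‖ : ℝ) : ℂ) ≠ 0 := by simp [hν]
  have hℓ' : ((‖ℓ‖ : ℝ) : ℂ) ≠ 0 := by simp [hℓ]
  ext i j
  fin_cases i <;> fin_cases j <;>
    simp [m2, Matrix.mul_apply, Fin.sum_univ_two, Matrix.one_apply, 
      Complex.ofReal_mul, mul_inv] <;>
    field_simp <;>
    linear_combination (ℓ * (starRingEnd ℂ) ℓ) * haν + ((‖ν‖ : ℝ) : ℂ) ^ 2 * haℓ

lemma conj_sum_zero {k' ℓ : ℂ} (horth : (k' * (starRingEnd ℂ) ℓ).re = 0) :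
    k' * (starRingEnd ℂ) ℓ + (starRingEnd ℂ) k' * ℓ = 0 := by
  have h := Complex.add_conj (k' * (starRingEnd ℂ) ℓ)
  rw [_root_.map_mul, Complex.conj_conj] at h
  rw [h, horth]
  norm_num

lemma m1_m2_anti {ν k' ℓ : ℂ} (horth : (k' * (starRingEnd ℂ) ℓ).re = 0) :
    m1 ν k' * m2 ν ℓ = -(m2 ν ℓ * m1 ν k') := by
  have hC := conj_sum_zero horth
  ext i j
  fin_cases i <;> fin_cases j <;>
    simp [m1, m2, Matrix.mul_apply, Fin.sum_univ_two, _root_.map_mul, 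
      Complex.ofReal_mul, mul_inv] <;>
  linear_combination (((‖k'‖ : ℝ) : ℂ)⁻¹ * ((‖ν‖ : ℝ) : ℂ)⁻¹ ^ 2 *
      ((‖ℓ‖ : ℝ) : ℂ)⁻¹ * ν * (starRingEnd ℂ) ν) * hC

lemma m3_m2_anti {ν ℓ : ℂ} : m3 * m2 ν ℓ = -(m2 ν ℓ * m3) := by
  ext i j
  fin_cases i <;> fin_cases j <;>
    simp [m2, m3, Matrix.mul_apply, Fin.sum_univ_two]

/-- Pointwise `ℂ`-linearity of `Dop` on linear combinations. -/
lemma Dop_linear (ϑs : ℝ) (ν k' ℓ : ℂ) (κ : ℝ → ℝ) (μ : ℝ)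
    {f g : ℝ → Fin 2 → ℂ} (hf : Differentiable ℝ f) (hg : Differentiable ℝ g)
    (a b : ℂ) (t : ℝ) :
    Dop ϑs ν k' ℓ κ μ (fun s => a • f s + b • g s) t
      = a • Dop ϑs ν k' ℓ κ μ f t + b • Dop ϑs ν k' ℓ κ μ g t := by
  have hd : HasDerivAt (fun s => a • f s + b • g s)
      (a • deriv f t + b • deriv g t) t :=
    ((hf t).hasDerivAt.const_smul a).add ((hg t).hasDerivAt.const_smul b)
  rw [Dop, Dop, Dop, hd.deriv]
  funext i
  simp only [Matrix.mulVec, dotProduct, Fin.sum_univ_two, Pi.add_apply, Pi.smul_apply,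
    smul_eq_mul, Complex.real_smul]
  ring

/-- `D(μ) = D(0) + (μ ν_F |ℓ|) m₂`. -/
lemma Dop_mu (ϑs : ℝ) (ν k' ℓ : ℂ) (κ : ℝ → ℝ) (μ : ℝ) (u : ℝ → Fin 2 → ℂ) (t : ℝ) :
    Dop ϑs ν k' ℓ κ μ u t
      = Dop ϑs ν k' ℓ κ 0 u t + (((μ * ‖ν‖ * ‖ℓ‖ : ℝ)) : ℂ) • (m2 ν ℓ).mulVec (u t) := by
  funext i
  simp only [Dop, Matrix.mulVec, dotProduct, Fin.sum_univ_two, Pi.add_apply, Pi.smul_apply,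
    smul_eq_mul, Complex.real_smul]
  push_cast
  ring

/-- `D(0)` anticommutes with `m₂`. -/
lemma Dop_m2 (ϑs : ℝ) {ν k' ℓ : ℂ} (horth : (k' * (starRingEnd ℂ) ℓ).re = 0)
    (κ : ℝ → ℝ) {f : ℝ → Fin 2 → ℂ} (hf : Differentiable ℝ f) (t : ℝ) :
    Dop ϑs ν k' ℓ κ 0 (fun s => (m2 ν ℓ).mulVec (f s)) t
      = -((m2 ν ℓ).mulVec (Dop ϑs ν k' ℓ κ 0 f t)) := by
  have hd : HasDerivAt (fun s => (m2 ν ℓ).mulVec (f s)) ((m2 ν ℓ).mulVec (deriv f t)) t :=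
    hasDerivAt_mulVec (hf t).hasDerivAt
  rw [Dop, Dop, hd.deriv]
  rw [Matrix.mulVec_smul, Matrix.mulVec_mulVec, Matrix.mulVec_mulVec, Matrix.mulVec_mulVec,
    m1_m2_anti horth, m3_m2_anti, Matrix.neg_mulVec, Matrix.neg_mulVec,
    ← Matrix.mulVec_mulVec (deriv f t) (m2 ν ℓ) (m1 ν k'),
    ← Matrix.mulVec_mulVec (f t) (m2 ν ℓ) m3]
  rw [Matrix.mulVec_add, Matrix.mulVec_add]
  simp only [zero_mul, zero_smul, Matrix.mulVec_smul, smul_neg, Matrix.mulVec_zero,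
    smul_zero, add_zero, zero_add, neg_add]

end Stmt14Aux

open Stmt14Aux in
/-- Every nonzero `L²` eigenvalue `ϑ` of `D⋆` produces the pair of `L²` eigenvalues
`±√(ϑ² + μ²ν_F²|ℓ|²)` of `D(μ)`. -/
theorem stmt14 (ϑstar : ℝ) (hϑstar : ϑstar ≠ 0) (ν k' ℓ : ℂ)
    (hν : ν ≠ 0) (hk : k' ≠ 0) (hℓ : ℓ ≠ 0)
    (horth : (k' * (starRingEnd ℂ) ℓ).re = 0)
    (κ : ℝ → ℝ) (hκ : ContDiff ℝ (⊤ : ℕ∞) κ) (L : ℝ) (hL : 0 < L)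
    (hκm : ∀ t : ℝ, t ≤ -L → κ t = -1) (hκp : ∀ t : ℝ, L ≤ t → κ t = 1)
    (ϑ : ℝ) (hϑ : ϑ ≠ 0) (μ : ℝ)
    (f : ℝ → Fin 2 → ℂ) (hfdiff : Differentiable ℝ f)
    (hfL2 : MemLp f 2 (volume : Measure ℝ)) (hfne : f ≠ 0)
    (heig : ∀ t : ℝ, Dop ϑstar ν k' ℓ κ 0 f t = (ϑ : ℂ) • f t) :
    LinearIndependent ℂ ![f, fun t => (m2 ν ℓ).mulVec (f t)] ∧
    ∀ s : ℝ, s = 1 ∨ s = -1 →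
      ∃ ap am : ℂ, ¬(ap = 0 ∧ am = 0) ∧
        ∀ w : ℝ → Fin 2 → ℂ,
          (∀ t : ℝ, w t = ap • f t + am • (m2 ν ℓ).mulVec (f t)) →
          w ≠ 0 ∧ MemLp w 2 (volume : Measure ℝ) ∧
          ∀ t : ℝ, Dop ϑstar ν k' ℓ κ μ w t =
            ((s * Real.sqrt (ϑ ^ 2 + μ ^ 2 * ‖ν‖ ^ 2 * ‖ℓ‖ ^ 2) : ℝ) : ℂ) • w t := by
  classical
  set M2 := m2 ν ℓ with hM2
  set g : ℝ → Fin 2 → ℂ := fun t => M2.mulVec (f t) with hg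
  have hM2sq : ∀ v : Fin 2 → ℂ, M2.mulVec (M2.mulVec v) = v := by
    intro v
    rw [Matrix.mulVec_mulVec, m2_sq hν hℓ, Matrix.one_mulVec]
  have hgdiff : Differentiable ℝ g := fun t =>
    (hasDerivAt_mulVec (hfdiff t).hasDerivAt).differentiableAt
  -- eigenvalue equation for g
  have hgeig : ∀ t : ℝ, Dop ϑstar ν k' ℓ κ 0 g t = (-(ϑ : ℂ)) • g t := by
    intro t
    rw [hg]
    rw [Dop_m2 ϑstar horth κ hfdiff t, heig t]
    rw [Matrix.mulVec_smul]
    simp [hg, hM2]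
  -- there is a point where f is nonzero
  obtain ⟨t0, ht0⟩ : ∃ t0, f t0 ≠ 0 := by
    by_contra h
    push_neg at h
    exact hfne (funext fun t => h t)
  -- only the trivial combination of f, g vanishes identically
  have haux : ∀ a b : ℂ, (∀ t : ℝ, a • f t + b • g t = 0) → a = 0 ∧ b = 0 := by
    intro a b hab
    have hzero : (fun s => a • f s + b • g s) = (fun _ : ℝ => (0 : Fin 2 → ℂ)) :=
      funext hab
    have hD : ∀ t, Dop ϑstar ν k' ℓ κ 0 (fun s => a • f s + b • g s) t = 0 := by
      intro t
      rw [hzero]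
      have hdz : HasDerivAt (fun _ : ℝ => (0 : Fin 2 → ℂ)) 0 t := hasDerivAt_const t 0
      rw [Dop, hdz.deriv]
      simp
    have hD2 : ∀ t, (a * ϑ) • f t + (-(b * ϑ)) • g t = 0 := by
      intro t
      have := hD t
      rw [Dop_linear ϑstar ν k' ℓ κ 0 hfdiff hgdiff a b t, heig t, hgeig t] at this
      calc (a * ϑ) • f t + (-(b * ϑ)) • g t
          = a • ((ϑ : ℂ) • f t) + b • ((-(ϑ:ℂ)) • g t) := by
            rw [smul_smul, smul_smul]; ring_nf
        _ = 0 := this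
    have ha : a = 0 := by
      by_contra ha
      have h1 := hab t0
      have h2 := hD2 t0
      -- ϑ • h1 + h2 : 2 a ϑ • f t0 = 0
      have h3 : (2 * a * ϑ) • f t0 = 0 := by
        have := congrArg (fun v => (ϑ : ℂ) • v + ((a * ϑ) • f t0 + (-(b * ϑ)) • g t0)) h1
        simp only [smul_add, smul_smul, h2, smul_zero, add_zero] at this
        calc (2 * a * ϑ) • f t0
            = (ϑ : ℂ) • (a • f t0 + b • g t0) + ((a * ϑ) • f t0 + (-(b * ϑ)) • g t0) := by
              simp only [smul_add, smul_smul]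
              module
          _ = 0 := by rw [h1]; simpa using h2
      have hne : (2 * a * (ϑ:ℂ)) ≠ 0 := by
        simp [ha, hϑ, Complex.ofReal_eq_zero]
      rcases smul_eq_zero.mp h3 with h | h
      · exact hne h
      · exact ht0 h
    refine ⟨ha, ?_⟩
    by_contra hb
    have h1 := hab t0
    rw [ha, zero_smul, zero_add] at h1
    rcases smul_eq_zero.mp h1 with h | h
    · exact hb h
    · exact ht0 (by rw [← hM2sq (f t0), show M2.mulVec (f t0) = g t0 from rfl, h,
        Matrix.mulVec_zero])
  have hLI : LinearIndependent ℂ ![f, fun t => (m2 ν ℓ).mulVec (f t)] := by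
    rw [Fintype.linearIndependent_iff]
    intro c hc
    have h01 : c 0 • f + c 1 • g = 0 := by
      have : ∑ i : Fin 2, c i • ![f, fun t => (m2 ν ℓ).mulVec (f t)] i
          = c 0 • f + c 1 • g := by
        simp [Fin.sum_univ_two, hg, hM2]
      rw [this] at hc
      exact hc
    have := haux (c 0) (c 1) (fun t => by
      have := congrFun h01 t
      simpa using this)
    intro i
    fin_cases i
    · exact this.1
    · exact this.2
  refine ⟨hLI, ?_⟩
  intro s hs
  -- notation for eigenvalue and coupling
  set c : ℝ := μ * ‖ν‖ * ‖ℓ‖ with hc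
  set lam : ℝ := s * Real.sqrt (ϑ ^ 2 + μ ^ 2 * ‖ν‖ ^ 2 * ‖ℓ‖ ^ 2) with hlam
  have hs2 : s ^ 2 = 1 := by rcases hs with h | h <;> rw [h] <;> norm_num
  have hlam2 : lam ^ 2 = ϑ ^ 2 + c ^ 2 := by
    rw [hlam, mul_pow, hs2, one_mul, Real.sq_sqrt (by positivity), hc]
    ring
  -- the two candidate coefficient pairs
  have key : ∀ ap am : ℂ,
      (lam : ℂ) * ap = ap * ϑ + am * c → (lam : ℂ) * am = ap * c - am * ϑ →
      ¬(ap = 0 ∧ am = 0) →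
      ∃ ap' am' : ℂ, ¬(ap' = 0 ∧ am' = 0) ∧
        ∀ w : ℝ → Fin 2 → ℂ,
          (∀ t : ℝ, w t = ap' • f t + am' • (m2 ν ℓ).mulVec (f t)) →
          w ≠ 0 ∧ MemLp w 2 (volume : Measure ℝ) ∧
          ∀ t : ℝ, Dop ϑstar ν k' ℓ κ μ w t =
            ((s * Real.sqrt (ϑ ^ 2 + μ ^ 2 * ‖ν‖ ^ 2 * ‖ℓ‖ ^ 2) : ℝ) : ℂ) • w t := by
    intro ap am e1 e2 hne
    refine ⟨ap, am, hne, ?_⟩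
    intro w hw
    have hwfun : w = fun t => ap • f t + am • g t := funext fun t => hw t
    refine ⟨?_, ?_, ?_⟩
    · -- w ≠ 0
      intro hw0
      have : ∀ t, ap • f t + am • g t = 0 := by
        intro t
        rw [← hw t, hw0]
        rfl
      exact hne (haux ap am this)
    · -- MemLp
      have hgL2 : MemLp g 2 (volume : Measure ℝ) := by
        have := (mvL M2).comp_memLp' hfL2
        simpa [Function.comp_def, hg] using this
      have : MemLp (ap • f + am • g) 2 (volume : Measure ℝ) :=
        (hfL2.const_smul ap).add (hgL2.const_smul am)
      rw [hwfun]
      exact this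
    · -- eigenvalue equation
      intro t
      rw [hwfun]
      rw [Dop_linear ϑstar ν k' ℓ κ μ hfdiff hgdiff ap am t]
      rw [Dop_mu ϑstar ν k' ℓ κ μ f t, Dop_mu ϑstar ν k' ℓ κ μ g t,
        heig t, hgeig t]
      have hm2g : M2.mulVec (g t) = f t := hM2sq (f t)
      have hm2f : M2.mulVec (f t) = g t := rfl
      rw [hm2g, hm2f]
      rw [← hlam]
      have expand : ap • ((ϑ:ℂ) • f t + ((c:ℝ):ℂ) • g t)
            + am • ((-(ϑ:ℂ)) • g t + ((c:ℝ):ℂ) • f t)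
          = (ap * ϑ + am * c) • f t + (ap * c - am * ϑ) • g t := by
        simp only [smul_add, smul_smul]
        module
      rw [expand, ← e1, ← e2]
      simp only [smul_add, smul_smul]
  by_cases hd : lam + ϑ = 0
  · -- degenerate case: lam = -ϑ and c = 0
    have hlamϑ : lam = -ϑ := by linarith
    have hc0 : c = 0 := by
      have h2 : c ^ 2 = 0 := by
        rw [hlamϑ] at hlam2
        nlinarith [hlam2]
      exact pow_eq_zero_iff (by norm_num) |>.mp h2
    refine key 0 1 ?_ ?_ ?_
    · rw [hc0]; simp
    · rw [hlamϑ, hc0]; push_cast; ring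
    · simp
  · -- generic case
    refine key ((lam : ℂ) + ϑ) ((c : ℝ) : ℂ) ?_ ?_ ?_
    · have e1ℝ : lam * (lam + ϑ) = (lam + ϑ) * ϑ + c * c := by nlinarith [hlam2]
      have e1c := congrArg (fun x : ℝ => (x : ℂ)) e1ℝ
      push_cast at e1c
      linear_combination e1c
    · push_cast; ring
    · intro h
      apply hd
      have := h.1
      exact_mod_cast this
end
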